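/- arXiv:2011.14142 — 10 statements merged into one kernel-verified Lean document; each statement's English description precedes it below -/
import Mathlib

section
/- Let n ≥ 1, let 0 < c₁ < c₂ < ... < cₙ be real numbers and s₁ < s₂ < ... < sₙ be real numbers. Then the n×n matrix with (i,j)-entry c_j^{s_i} has rank n (equivalently, is invertible). -/
/-!
A nonzero generalized polynomial `∑ aᵢ t ^ sᵢ` with `n` terms has at most `n - 1` positive
zeros. After dividing by `t ^ s₀`, the derivative kills the constant term and is again a
generalized polynomial, now with `n - 1` terms, and by Rolle's theorem it vanishes at a point
strictly between any two consecutive zeros; induct on `n`. Hence a vector `v` with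
`v ᵥ* (c_j ^ s_i) = 0` is zero, so the matrix has nonzero determinant.
-/

theorem exists_interlacing_hasDerivAt_eq_zero {n : ℕ} {f f' : ℝ → ℝ}
    {x : Fin (n + 1) → ℝ} (hx : StrictMono x) (hfx : ∀ j, f (x j) = 0)
    (hf : ∀ t ∈ Set.Icc (x 0) (x (Fin.last n)), HasDerivAt f (f' t) t) :
    ∃ y : Fin n → ℝ, StrictMono y ∧ (∀ j, y j ∈ Set.Ioo (x j.castSucc) (x j.succ)) ∧
      ∀ j, f' (y j) = 0 := by
  have hsub : ∀ j : Fin n, Set.Icc (x j.castSucc) (x j.succ) ⊆ Set.Icc (x 0) (x (Fin.last n)) :=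
    fun j => Set.Icc_subset_Icc (hx.monotone (Fin.zero_le _)) (hx.monotone (Fin.le_last _))
  have hrolle : ∀ j : Fin n, ∃ t ∈ Set.Ioo (x j.castSucc) (x j.succ), f' t = 0 := fun j =>
    exists_hasDerivAt_eq_zero (hx Fin.castSucc_lt_succ)
      (fun t ht => (hf t (hsub j ht)).continuousAt.continuousWithinAt)
      (by rw [hfx, hfx]) (fun t ht => hf t (hsub j (Set.Ioo_subset_Icc_self ht)))
  choose y hy hfy using hrolle
  refine ⟨y, fun j k hjk => ?_, hy, hfy⟩
  calc y j < x j.succ := (hy j).2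
    _ ≤ x k.castSucc := hx.monotone (Fin.succ_le_castSucc_iff.mpr hjk)
    _ < y k := (hy k).1

theorem hasDerivAt_sum_mul_rpow {ι : Type*} [Fintype ι] (a s : ι → ℝ) {t : ℝ} (ht : 0 < t) :
    HasDerivAt (fun t => ∑ i, a i * t ^ s i) (∑ i, a i * (s i * t ^ (s i - 1))) t :=
  HasDerivAt.fun_sum fun i _ => (Real.hasDerivAt_rpow_const (Or.inl ht.ne')).const_mul (a i)

theorem sum_mul_rpow_sub {ι : Type*} [Fintype ι] (a s : ι → ℝ) (r : ℝ) {t : ℝ} (ht : 0 < t) :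
    ∑ i, a i * t ^ (s i - r) = (∑ i, a i * t ^ s i) / t ^ r := by
  rw [Finset.sum_div]
  exact Finset.sum_congr rfl fun i _ => by rw [Real.rpow_sub ht, mul_div_assoc]

theorem eq_zero_of_sum_mul_rpow_eq_zero {n : ℕ} {s x : Fin n → ℝ} (hs : StrictMono s)
    (hx : StrictMono x) (hx0 : ∀ j, 0 < x j) {a : Fin n → ℝ}
    (ha : ∀ j, ∑ i, a i * x j ^ s i = 0) : a = 0 := by
  induction n with
  | zero => exact Subsingleton.elim _ _
  | succ n ih =>
    have hs0 : ∀ i : Fin n, 0 < s i.succ - s 0 := fun i => sub_pos.mpr (hs (Fin.succ_pos i))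
    obtain ⟨y, hy, hyx, hy0⟩ := exists_interlacing_hasDerivAt_eq_zero hx
      (f := fun t => ∑ i, a i * t ^ (s i - s 0))
      (fun j => by rw [sum_mul_rpow_sub a s _ (hx0 j), ha j, zero_div])
      (fun t ht => hasDerivAt_sum_mul_rpow a (s · - s 0) ((hx0 0).trans_le ht.1))
    have hderivCoeff : (fun i : Fin n => a i.succ * (s i.succ - s 0)) = 0 := by
      refine ih (s := fun i => s i.succ - s 0 - 1) (fun i j hij => ?_) hy
        (fun j => (hx0 _).trans (hyx j).1) fun j => ?_
      · simpa using hs (Fin.succ_lt_succ_iff.mpr hij)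
      · simpa only [Fin.sum_univ_succ, sub_self, zero_mul, mul_zero, zero_add, mul_assoc]
          using hy0 j
    have hsucc : ∀ i : Fin n, a i.succ = 0 := fun i =>
      (mul_eq_zero.mp (congrFun hderivCoeff i)).resolve_right (hs0 i).ne'
    have hzero : a 0 * x 0 ^ s 0 = 0 := by
      simpa [Fin.sum_univ_succ, hsucc] using ha 0
    have h0 : a 0 = 0 :=
      (mul_eq_zero.mp hzero).resolve_right (Real.rpow_pos_of_pos (hx0 0) _).ne'
    ext i
    cases i using Fin.cases with
    | zero => exact h0
    | succ i => exact hsucc i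

theorem det_rpow_ne_zero {n : ℕ} {c s : Fin n → ℝ} (hc0 : ∀ j, 0 < c j) (hc : StrictMono c)
    (hs : StrictMono s) : (Matrix.of fun i j : Fin n => c j ^ s i).det ≠ 0 := by
  intro hdet
  obtain ⟨v, hv, hvA⟩ := Matrix.exists_vecMul_eq_zero_iff.mpr hdet
  exact hv (eq_zero_of_sum_mul_rpow_eq_zero hs hc hc0 fun j => congrFun hvA j)

theorem generalized_vandermonde_rank_general (n : ℕ) (c s : Fin n → ℝ)
    (hc0 : ∀ j, 0 < c j) (hc : StrictMono c) (hs : StrictMono s) :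
    (Matrix.of fun i j : Fin n => (c j) ^ (s i)).rank = n := by
  rw [Matrix.rank_of_isUnit _ ((Matrix.isUnit_iff_isUnit_det _).mpr
    (det_rpow_ne_zero hc0 hc hs).isUnit), Fintype.card_fin]

/-- Generalized Vandermonde matrix `(c_j ^ s_i)` with `0 < c₁ < ... < cₙ` and
`s₁ < ... < sₙ` has full rank `n`. -/
theorem generalized_vandermonde_rank (n : ℕ) (hn : 1 ≤ n) (c s : Fin n → ℝ)
    (hc0 : ∀ j, 0 < c j) (hc : StrictMono c) (hs : StrictMono s) :
    (Matrix.of fun i j : Fin n => (c j) ^ (s i)).rank = n :=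
  generalized_vandermonde_rank_general n c s hc0 hc hs
end

section
/- Let n ≥ 1, let 0 < c₁ < ... < cₙ and s₁ < ... < sₙ be reals, and let λ₁,...,λₙ be reals, not all zero. Then the function x ↦ Σᵢ λᵢ x^{sᵢ} has fewer than n zeros in (0,∞); in particular it cannot vanish at all of c₁,...,cₙ. -/
/-!
Dividing `Σᵢ lᵢ x^{sᵢ}` by the power `x^{sₐ}` of one of its terms does not change its zeros in
`(0,∞)` and turns that term into a constant, which differentiation kills. The derivative is again
such a sum, with one term fewer and coefficients `lᵢ (sᵢ - sₐ)` nonzero wherever `lᵢ` is, and by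
Rolle's theorem a function has at most one zero more than its derivative. Induction on the number
of terms finishes the count; `n` distinct zeros `c₁ < ⋯ < cₙ` would exceed it.
-/

open Set

section Rolle

variable {f f' : ℝ → ℝ} {U : Set ℝ}

theorem card_le_ncard_deriv_zeros_add_one (hU : U.OrdConnected)
    (hf : ∀ x ∈ U, HasDerivAt f (f' x) x) (hZ' : {x ∈ U | f' x = 0}.Finite)
    {T : Finset ℝ} (hT : ∀ x ∈ T, x ∈ U ∧ f x = 0) :
    T.card ≤ {x ∈ U | f' x = 0}.ncard + 1 := by
  rw [ncard_eq_toFinset_card _ hZ']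
  refine Finset.card_le_of_interleaved fun x hx y hy hxy _ => ?_
  obtain ⟨hxU, hfx⟩ := hT x hx
  obtain ⟨hyU, hfy⟩ := hT y hy
  have hIcc : Icc x y ⊆ U := hU.out hxU hyU
  obtain ⟨z, hz, hf'z⟩ := exists_hasDerivAt_eq_zero hxy
    (fun w hw => (hf w (hIcc hw)).continuousAt.continuousWithinAt) (hfx.trans hfy.symm)
    (fun w hw => hf w (hIcc (Ioo_subset_Icc_self hw)))
  exact ⟨z, hZ'.mem_toFinset.2 ⟨hIcc (Ioo_subset_Icc_self hz), hf'z⟩, hz⟩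

theorem finite_zeros_and_ncard_le_ncard_deriv_zeros_add_one (hU : U.OrdConnected)
    (hf : ∀ x ∈ U, HasDerivAt f (f' x) x) (hZ' : {x ∈ U | f' x = 0}.Finite) :
    {x ∈ U | f x = 0}.Finite ∧ {x ∈ U | f x = 0}.ncard ≤ {x ∈ U | f' x = 0}.ncard + 1 := by
  have hcard {T : Finset ℝ} (hT : ↑T ⊆ {x ∈ U | f x = 0}) :=
    card_le_ncard_deriv_zeros_add_one hU hf hZ' fun x hx => hT hx
  have hfin : {x ∈ U | f x = 0}.Finite := by
    by_contra hinf
    obtain ⟨T, hT, hTcard⟩ := Set.Infinite.exists_subset_card_eq hinf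
      ({x ∈ U | f' x = 0}.ncard + 2)
    have := hcard hT
    omega
  refine ⟨hfin, ?_⟩
  rw [ncard_eq_toFinset_card _ hfin]
  exact hcard (by simp)

end Rolle

section RpowSum

variable {ι : Type*} {x : ℝ}

theorem hasDerivAt_sum_mul_rpow_s1 (S : Finset ι) (l t : ι → ℝ) (hx : 0 < x) :
    HasDerivAt (fun y => ∑ i ∈ S, l i * y ^ t i) (∑ i ∈ S, l i * (t i * x ^ (t i - 1))) x :=
  HasDerivAt.fun_sum fun i _ => (Real.hasDerivAt_rpow_const (Or.inl hx.ne')).const_mul (l i)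

theorem sum_mul_rpow_eq_rpow_mul_sum (S : Finset ι) (l s : ι → ℝ) (c : ℝ) (hx : 0 < x) :
    ∑ i ∈ S, l i * x ^ s i = x ^ c * ∑ i ∈ S, l i * x ^ (s i - c) := by
  rw [Finset.mul_sum]
  refine Finset.sum_congr rfl fun i _ => ?_
  rw [mul_left_comm, ← Real.rpow_add hx, add_sub_cancel]

theorem sum_insert_mul_rpow_ne_zero [DecidableEq ι] {S : Finset ι} {a : ι} {s l : ι → ℝ}
    (haS : a ∉ S) (hla : l a ≠ 0) (hlS : ∀ i ∈ S, l i = 0) (hx : 0 < x) :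
    ∑ i ∈ insert a S, l i * x ^ s i ≠ 0 := by
  rw [Finset.sum_insert haS, Finset.sum_eq_zero fun i hi => by rw [hlS i hi, zero_mul], add_zero]
  exact mul_ne_zero hla (Real.rpow_pos_of_pos hx _).ne'

theorem finite_and_ncard_lt_card_of_sum_mul_rpow_eq_zero (S : Finset ι) (s l : ι → ℝ)
    (hs : InjOn s S) (hl : ∃ i ∈ S, l i ≠ 0) :
    {x | 0 < x ∧ ∑ i ∈ S, l i * x ^ s i = 0}.Finite ∧
      {x | 0 < x ∧ ∑ i ∈ S, l i * x ^ s i = 0}.ncard < S.card := by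
  classical
  induction S using Finset.induction_on generalizing s l with
  | empty => simp at hl
  | insert a S haS ih =>
    rw [Finset.coe_insert, injOn_insert haS] at hs
    by_cases hlS : ∃ i ∈ S, l i ≠ 0
    · obtain ⟨i₀, hi₀, hli₀⟩ := hlS
      set g : ℝ → ℝ := fun x => ∑ i ∈ insert a S, l i * x ^ (s i - s a)
      have hzeros :
          {x | 0 < x ∧ ∑ i ∈ insert a S, l i * x ^ s i = 0} = {x ∈ Ioi 0 | g x = 0} := by
        ext x
        simp only [mem_ofPred_eq, mem_Ioi, and_congr_right_iff]
        intro hx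
        rw [sum_mul_rpow_eq_rpow_mul_sum _ _ _ (s a) hx, mul_eq_zero,
          or_iff_right (Real.rpow_pos_of_pos hx _).ne']
      have hderiv (x) (hx : x ∈ Ioi 0) :
          HasDerivAt g (∑ i ∈ S, l i * (s i - s a) * x ^ (s i - s a - 1)) x := by
        convert hasDerivAt_sum_mul_rpow_s1 (insert a S) l (fun i => s i - s a) hx using 1
        simp only [Finset.sum_insert haS, sub_self, zero_mul, mul_zero, zero_add, mul_assoc]
      obtain ⟨hfin', hcard'⟩ := ih (fun i => s i - s a - 1) (fun i => l i * (s i - s a))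
        (fun i hi j hj h => hs.1 hi hj (by simpa using h))
        ⟨i₀, hi₀, mul_ne_zero hli₀ (sub_ne_zero.2 fun h => hs.2 ⟨i₀, hi₀, h⟩)⟩
      obtain ⟨hfin, hle⟩ :=
        finite_zeros_and_ncard_le_ncard_deriv_zeros_add_one ordConnected_Ioi hderiv hfin'
      rw [hzeros, Finset.card_insert_of_notMem haS]
      exact ⟨hfin, hle.trans_lt (Nat.add_lt_add_right hcard' 1)⟩
    · push Not at hlS
      have hla : l a ≠ 0 := by
        obtain ⟨i, hi, hli⟩ := hl
        rcases Finset.mem_insert.1 hi with rfl | hi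
        exacts [hli, absurd (hlS i hi) hli]
      have hempty : {x | 0 < x ∧ ∑ i ∈ insert a S, l i * x ^ s i = 0} = ∅ :=
        eq_empty_of_forall_notMem fun x ⟨hx, hfx⟩ => sum_insert_mul_rpow_ne_zero haS hla hlS hx hfx
      simp [hempty]

end RpowSum

theorem exponential_polynomial_few_zeros_general (n : ℕ) (c s l : Fin n → ℝ)
    (hc0 : ∀ j, 0 < c j) (hc : StrictMono c) (hs : StrictMono s) (hl : l ≠ 0) :
    ({x : ℝ | 0 < x ∧ ∑ i, l i * x ^ (s i) = 0}.Finite ∧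
      {x : ℝ | 0 < x ∧ ∑ i, l i * x ^ (s i) = 0}.ncard < n) ∧
    ∃ j, ∑ i, l i * (c j) ^ (s i) ≠ 0 := by
  obtain ⟨hfin, hcard⟩ := finite_and_ncard_lt_card_of_sum_mul_rpow_eq_zero Finset.univ s l
    hs.injective.injOn (by simpa [Function.ne_iff] using hl)
  rw [Finset.card_univ, Fintype.card_fin] at hcard
  refine ⟨⟨hfin, hcard⟩, ?_⟩
  by_contra! h
  have hrange : range c ⊆ {x : ℝ | 0 < x ∧ ∑ i, l i * x ^ (s i) = 0} := by
    rintro _ ⟨j, rfl⟩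
    exact ⟨hc0 j, h j⟩
  have hle := ncard_le_ncard hrange hfin
  rw [ncard_range_of_injective hc.injective, Nat.card_fin] at hle
  omega

/-- A nonzero real linear combination `x ↦ Σᵢ lᵢ x^{sᵢ}` of distinct real power
functions has fewer than `n` zeros in `(0,∞)`; in particular it cannot vanish at
all of the points `0 < c₁ < ... < cₙ`. -/
theorem exponential_polynomial_few_zeros (n : ℕ) (hn : 1 ≤ n) (c s l : Fin n → ℝ)
    (hc0 : ∀ j, 0 < c j) (hc : StrictMono c) (hs : StrictMono s) (hl : l ≠ 0) :
    ({x : ℝ | 0 < x ∧ ∑ i, l i * x ^ (s i) = 0}.Finite ∧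
      {x : ℝ | 0 < x ∧ ∑ i, l i * x ^ (s i) = 0}.ncard < n) ∧
    ∃ j, ∑ i, l i * (c j) ^ (s i) ≠ 0 :=
  exponential_polynomial_few_zeros_general n c s l hc0 hc hs hl
end

section
/- For every odd positive integer ℓ and every complex number z with Re(z) ≥ 0, we have Re(z^ℓ) ≤ ℓ·|z|^{ℓ-1}·Re(z). -/
/-!
Multiplying by `I` turns `Re (z ^ ℓ)` into `± Im ((z * I) ^ ℓ)` when `ℓ` is odd, and
`Im (z * I) = Re z`. So it suffices to show `|Im (w ^ (n + 1))| ≤ (n + 1) ‖w‖ ^ n |Im w|`, which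
follows by induction from `Im (w ^ (n + 1) * w) = Im (w ^ (n + 1)) Re w + Re (w ^ (n + 1)) Im w`.
-/

open Complex

lemma Complex.abs_im_pow_succ_le (w : ℂ) (n : ℕ) :
    |(w ^ (n + 1)).im| ≤ ((n : ℝ) + 1) * ‖w‖ ^ n * |w.im| := by
  induction n with
  | zero => simp
  | succ n ih =>
    have hre : |(w ^ (n + 1)).re| ≤ ‖w‖ ^ (n + 1) := (abs_re_le_norm _).trans_eq (norm_pow _ _)
    calc |(w ^ (n + 1 + 1)).im|
        = |(w ^ (n + 1)).re * w.im + (w ^ (n + 1)).im * w.re| := by rw [pow_succ, mul_im]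
      _ ≤ ‖w‖ ^ (n + 1) * |w.im| + |(w ^ (n + 1)).im| * ‖w‖ := by
          grw [abs_add_le, abs_mul, abs_mul, abs_re_le_norm w, hre]
      _ ≤ ‖w‖ ^ (n + 1) * |w.im| + ((n + 1) * ‖w‖ ^ n * |w.im|) * ‖w‖ := by gcongr
      _ = (((n + 1 : ℕ) : ℝ) + 1) * ‖w‖ ^ (n + 1) * |w.im| := by push_cast; ring

lemma Complex.abs_re_pow_eq_abs_im_mul_I_pow {ℓ : ℕ} (hℓ : Odd ℓ) (z : ℂ) :
    |(z ^ ℓ).re| = |((z * I) ^ ℓ).im| := by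
  obtain ⟨k, rfl⟩ := hℓ
  rw [mul_pow, pow_succ I, pow_mul, I_sq]
  rcases neg_one_pow_eq_or ℂ k with h | h <;> simp [h]

theorem re_pow_le_of_odd_general (ℓ : ℕ) (hodd : Odd ℓ) (z : ℂ) (hz : 0 ≤ z.re) :
    (z ^ ℓ).re ≤ (ℓ : ℝ) * ‖z‖ ^ (ℓ - 1) * z.re := by
  obtain ⟨n, rfl⟩ : ∃ n, ℓ = n + 1 := Nat.exists_eq_add_one.mpr hodd.pos
  calc (z ^ (n + 1)).re ≤ |(z ^ (n + 1)).re| := le_abs_self _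
    _ = |((z * I) ^ (n + 1)).im| := abs_re_pow_eq_abs_im_mul_I_pow hodd z
    _ ≤ ((n : ℝ) + 1) * ‖z * I‖ ^ n * |(z * I).im| := abs_im_pow_succ_le _ _
    _ = ((n + 1 : ℕ) : ℝ) * ‖z‖ ^ (n + 1 - 1) * z.re := by simp [abs_of_nonneg hz]

/-- For odd positive `ℓ` and `z : ℂ` with `Re z ≥ 0`, `Re(z^ℓ) ≤ ℓ·|z|^{ℓ-1}·Re z`. -/
theorem re_pow_le_of_odd (ℓ : ℕ) (hodd : Odd ℓ) (hpos : 0 < ℓ) (z : ℂ) (hz : 0 ≤ z.re) :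
    (z ^ ℓ).re ≤ (ℓ : ℝ) * ‖z‖ ^ (ℓ - 1) * z.re :=
  re_pow_le_of_odd_general ℓ hodd z hz
end

section
/- For every real p > 1, the function z ↦ ⌊z⁻¹⌋·z^p + (1 − ⌊z⁻¹⌋·z)^p is strictly increasing on (0,1]. -/
/-!
On each block `((n + 1)⁻¹, n⁻¹]` the floor `⌊z⁻¹⌋` is the constant `n ≥ 1`, and the function is
`n z ^ p + (1 - n z) ^ p`, whose derivative `n p (z ^ (p - 1) - (1 - n z) ^ (p - 1))` is positive
there because `0 ≤ 1 - n z < z`. The block runs from the value `(n + 1) ^ (1 - p)` at its left end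
to `n ^ (1 - p)` at its right end, so consecutive blocks join up and the pieces form one strictly
increasing function.
-/

open Set

section FloorInv

variable {K : Type*} [Field K] [LinearOrder K] [IsStrictOrderedRing K] [FloorRing K] {z : K}

lemma one_le_floor_inv (hz₀ : 0 < z) (hz₁ : z ≤ 1) : 1 ≤ ⌊z⁻¹⌋ := by
  rw [Int.le_floor, Int.cast_one]
  exact (one_le_inv₀ hz₀).2 hz₁

lemma inv_floor_inv_add_one_lt (hz₀ : 0 < z) : ((⌊z⁻¹⌋ : K) + 1)⁻¹ < z :=
  inv_lt_of_inv_lt₀ hz₀ (Int.lt_floor_add_one _)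

lemma le_inv_floor_inv (hz₀ : 0 < z) (hz₁ : z ≤ 1) : z ≤ (⌊z⁻¹⌋ : K)⁻¹ := by
  have hn : (0 : K) < ⌊z⁻¹⌋ := by exact_mod_cast (one_le_floor_inv hz₀ hz₁).trans_lt' one_pos
  exact le_inv_of_le_inv₀ hn (Int.floor_le _)

lemma mem_Ioc_floor_inv (hz₀ : 0 < z) (hz₁ : z ≤ 1) :
    z ∈ Ioc ((⌊z⁻¹⌋ : K) + 1)⁻¹ (⌊z⁻¹⌋ : K)⁻¹ :=
  ⟨inv_floor_inv_add_one_lt hz₀, le_inv_floor_inv hz₀ hz₁⟩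

end FloorInv

/-- The function of the theorem on the block where `⌊z⁻¹⌋ = n`. -/
noncomputable def floorBlock (p n z : ℝ) : ℝ := n * z ^ p + (1 - n * z) ^ p

namespace floorBlock

variable {p n : ℝ}

lemma hasDerivAt (hp : 1 ≤ p) (x : ℝ) :
    HasDerivAt (floorBlock p n) (n * p * (x ^ (p - 1) - (1 - n * x) ^ (p - 1))) x := by
  have hpow : ∀ y : ℝ, HasDerivAt (fun z : ℝ => z ^ p) (p * y ^ (p - 1)) y :=
    fun y => Real.hasDerivAt_rpow_const (Or.inr hp)
  have hlin : HasDerivAt (fun z : ℝ => 1 - n * z) (-n) x := by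
    simpa using ((hasDerivAt_id x).const_mul n).const_sub 1
  refine (((hpow x).const_mul n).add ((hpow (1 - n * x)).comp x hlin)).congr_deriv ?_
  ring

lemma strictMonoOn (hp : 1 < p) (hn : 0 < n) :
    StrictMonoOn (floorBlock p n) (Icc (n + 1)⁻¹ n⁻¹) := by
  refine strictMonoOn_of_deriv_pos (convex_Icc _ _)
    (fun x _ => (hasDerivAt hp.le x).continuousAt.continuousWithinAt) ?_
  rw [interior_Icc]
  rintro x ⟨hx_left, hx_right⟩
  rw [(hasDerivAt hp.le x).deriv]
  have hnx : n * x < 1 := by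
    simpa [hn.ne'] using mul_lt_mul_of_pos_left hx_right hn
  have hgap : 1 - n * x < x := by
    have hn₁ : 0 < n + 1 := by linarith
    have : 1 < (n + 1) * x := by
      simpa [hn₁.ne'] using mul_lt_mul_of_pos_left hx_left hn₁
    linarith
  have hpow : (1 - n * x) ^ (p - 1) < x ^ (p - 1) :=
    Real.rpow_lt_rpow (by linarith) hgap (by linarith)
  exact mul_pos (mul_pos hn (by linarith)) (sub_pos.2 hpow)

lemma apply_inv (hp : 0 < p) (hn : 0 < n) : floorBlock p n n⁻¹ = n ^ (1 - p) := by
  rw [floorBlock, mul_inv_cancel₀ hn.ne', sub_self, Real.zero_rpow hp.ne', add_zero,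
    Real.inv_rpow hn.le, Real.rpow_sub hn, Real.rpow_one, div_eq_mul_inv]

lemma apply_inv_add_one (hn : 0 ≤ n) : floorBlock p n (n + 1)⁻¹ = (n + 1) ^ (1 - p) := by
  have hn₁ : 0 < n + 1 := by linarith
  have hrest : 1 - n * (n + 1)⁻¹ = (n + 1)⁻¹ := by field_simp; ring
  rw [floorBlock, hrest, Real.inv_rpow hn₁.le, Real.rpow_sub hn₁, Real.rpow_one, ← add_one_mul,
    div_eq_mul_inv, mul_comm]

lemma apply_le_rpow_of_mem_Ioc (hp : 1 < p) (hn : 0 < n) {z : ℝ} (hz : z ∈ Ioc (n + 1)⁻¹ n⁻¹) :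
    floorBlock p n z ≤ n ^ (1 - p) := by
  have hle : (n + 1)⁻¹ ≤ n⁻¹ := inv_anti₀ hn (by linarith)
  rw [← apply_inv (by linarith) hn]
  exact (strictMonoOn hp hn).monotoneOn (Ioc_subset_Icc_self hz) ⟨hle, le_rfl⟩ hz.2

lemma rpow_lt_apply_of_mem_Ioc (hp : 1 < p) (hn : 0 < n) {z : ℝ} (hz : z ∈ Ioc (n + 1)⁻¹ n⁻¹) :
    (n + 1) ^ (1 - p) < floorBlock p n z := by
  have hle : (n + 1)⁻¹ ≤ n⁻¹ := inv_anti₀ hn (by linarith)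
  rw [← apply_inv_add_one hn.le]
  exact strictMonoOn hp hn ⟨le_rfl, hle⟩ (Ioc_subset_Icc_self hz) hz.1

end floorBlock

/-- For real `p > 1`, the function `z ↦ ⌊z⁻¹⌋·z^p + (1 − ⌊z⁻¹⌋·z)^p` is
strictly increasing on `(0,1]`. -/
theorem floor_rpow_strictMonoOn (p : ℝ) (hp : 1 < p) :
    StrictMonoOn (fun z : ℝ => (⌊z⁻¹⌋ : ℝ) * z ^ p + (1 - (⌊z⁻¹⌋ : ℝ) * z) ^ p)
      (Set.Ioc 0 1) := by
  rintro z₁ ⟨hz₁, hz₁'⟩ z₂ ⟨hz₂, hz₂'⟩ hlt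
  change floorBlock p ⌊z₁⁻¹⌋ z₁ < floorBlock p ⌊z₂⁻¹⌋ z₂
  have hn₁ : (0 : ℝ) < ⌊z₁⁻¹⌋ := by exact_mod_cast one_le_floor_inv hz₁ hz₁'
  have hn₂ : (0 : ℝ) < ⌊z₂⁻¹⌋ := by exact_mod_cast one_le_floor_inv hz₂ hz₂'
  have hmem₁ := mem_Ioc_floor_inv hz₁ hz₁'
  have hmem₂ := mem_Ioc_floor_inv hz₂ hz₂'
  rcases (Int.floor_le_floor (inv_anti₀ hz₁ hlt.le)).eq_or_lt with heq | hgt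
  · rw [← heq] at hmem₁ ⊢
    exact floorBlock.strictMonoOn hp hn₂ (Ioc_subset_Icc_self hmem₁)
      (Ioc_subset_Icc_self hmem₂) hlt
  · have hsucc : (⌊z₂⁻¹⌋ : ℝ) + 1 ≤ ⌊z₁⁻¹⌋ := by exact_mod_cast hgt
    calc floorBlock p ⌊z₁⁻¹⌋ z₁ ≤ (⌊z₁⁻¹⌋ : ℝ) ^ (1 - p) :=
          floorBlock.apply_le_rpow_of_mem_Ioc hp hn₁ hmem₁
      _ ≤ ((⌊z₂⁻¹⌋ : ℝ) + 1) ^ (1 - p) :=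
          Real.rpow_le_rpow_of_nonpos (by linarith) hsucc (by linarith)
      _ < floorBlock p ⌊z₂⁻¹⌋ z₂ := floorBlock.rpow_lt_apply_of_mem_Ioc hp hn₂ hmem₂
end

section
/- For every real p > 1, the function z ↦ ⌊z⁻¹⌋·z^p + (1 − ⌊z⁻¹⌋·z)^p is a continuous bijection from (0,1] onto (0,1]. -/
/-!
On `[1/(n+1), 1/n]` the function is `g_n(z) = n z^p + (1 - n z)^p`: inside the interval the floor
is `n`, and at the left end, where the floor jumps to `n + 1`, both formulas give `(n+1)^(1-p)`.
Since `1 - n z < z` there, `g_n' = n p (z^(p-1) - (1 - n z)^(p-1)) > 0`, so `g_n` increases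
continuously from `(n+1)^(1-p)` to `n^(1-p)`. Gluing consecutive pieces, the function is continuous
and strictly increasing on each `[1/n, 1]`, with values from `n^(1-p)` to `1`; as `n^(1-p) → 0`,
the intermediate value theorem gives surjectivity onto `(0, 1]`.
-/

open Set Filter Topology Real

/-- The sum of the `p`-th powers of the parts when `1` is cut into `c` parts of length `z` and a
remainder. -/
noncomputable def powSplit (p c z : ℝ) : ℝ := c * z ^ p + (1 - c * z) ^ p

noncomputable def floorPowSplit (p z : ℝ) : ℝ := powSplit p ⌊z⁻¹⌋ z

section

variable {p : ℝ}

theorem hasDerivAt_powSplit (hp : 1 ≤ p) (c z : ℝ) :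
    HasDerivAt (powSplit p c) (c * p * (z ^ (p - 1) - (1 - c * z) ^ (p - 1))) z := by
  have h_rem : HasDerivAt (fun z : ℝ => 1 - c * z) (-c) z := by
    simpa using ((hasDerivAt_id z).const_mul c).const_sub 1
  exact (((hasDerivAt_rpow_const (Or.inr hp)).const_mul c).add
    ((hasDerivAt_rpow_const (Or.inr hp)).comp z h_rem)).congr_deriv (by ring)

theorem continuous_powSplit (hp : 0 ≤ p) (c : ℝ) : Continuous (powSplit p c) := by
  unfold powSplit
  fun_prop (disch := exact hp)

theorem strictMonoOn_powSplit (hp : 1 < p) {c : ℝ} (hc : 0 < c) :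
    StrictMonoOn (powSplit p c) (Icc (c + 1)⁻¹ c⁻¹) := by
  refine strictMonoOn_of_hasDerivWithinAt_pos (convex_Icc _ _)
    (continuous_powSplit (by linarith) c).continuousOn
    (fun z _ => (hasDerivAt_powSplit hp.le c z).hasDerivWithinAt) fun z hz => ?_
  rw [interior_Icc] at hz
  have h_rem_pos : 0 < 1 - c * z := by
    have := (lt_inv_mul_iff₀ hc).1 ((mul_one c⁻¹).symm ▸ hz.2)
    linarith
  have h_rem_lt : 1 - c * z < z := by
    have := (inv_lt_iff_one_lt_mul₀' (by linarith : 0 < c + 1)).1 hz.1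
    linarith
  have h_pow_lt := rpow_lt_rpow h_rem_pos.le h_rem_lt (sub_pos.2 hp)
  exact mul_pos (mul_pos hc (by linarith)) (sub_pos.2 h_pow_lt)

theorem powSplit_inv_self (hp : p ≠ 0) {c : ℝ} (hc : 0 < c) :
    powSplit p c c⁻¹ = c ^ (1 - p) := by
  rw [powSplit, mul_inv_cancel₀ hc.ne', sub_self, zero_rpow hp, add_zero, inv_rpow hc.le,
    rpow_sub hc, rpow_one, div_eq_mul_inv]

theorem powSplit_inv_add_one {c : ℝ} (hc : 0 ≤ c) :
    powSplit p c (c + 1)⁻¹ = (c + 1) ^ (1 - p) := by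
  have hc1 : 0 < c + 1 := by linarith
  have h_rem : 1 - c * (c + 1)⁻¹ = (c + 1)⁻¹ := by field_simp; ring
  rw [powSplit, h_rem, inv_rpow hc1.le, rpow_sub hc1, rpow_one, div_eq_mul_inv]
  ring

theorem floor_inv_eq_of_mem_Ioc {n : ℤ} (hn : 0 < n) {z : ℝ}
    (hz : z ∈ Ioc ((n : ℝ) + 1)⁻¹ (n : ℝ)⁻¹) : ⌊z⁻¹⌋ = n := by
  have hn' : (0 : ℝ) < n := by exact_mod_cast hn
  have hz0 : 0 < z := (inv_pos.2 (by linarith)).trans hz.1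
  rw [Int.floor_eq_iff]
  exact ⟨(le_inv_comm₀ hn' hz0).2 hz.2, (inv_lt_comm₀ (by linarith) hz0).1 hz.1⟩

theorem floorPowSplit_natCast_inv (hp : p ≠ 0) {n : ℕ} (hn : 0 < n) :
    floorPowSplit p (n : ℝ)⁻¹ = (n : ℝ) ^ (1 - p) := by
  rw [floorPowSplit, inv_inv, Int.floor_natCast, Int.cast_natCast,
    powSplit_inv_self hp (by exact_mod_cast hn)]

theorem floorPowSplit_one (hp : p ≠ 0) : floorPowSplit p 1 = 1 := by
  simpa using floorPowSplit_natCast_inv hp one_pos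

theorem eqOn_floorPowSplit (hp : p ≠ 0) {n : ℕ} (hn : 0 < n) :
    EqOn (floorPowSplit p) (powSplit p n) (Icc ((n : ℝ) + 1)⁻¹ (n : ℝ)⁻¹) := by
  rintro z ⟨hz_left, hz_right⟩
  rcases hz_left.eq_or_lt with rfl | hz_left
  · have h_end := floorPowSplit_natCast_inv hp (Nat.succ_pos n)
    push_cast at h_end
    rw [h_end, powSplit_inv_add_one n.cast_nonneg]
  · rw [floorPowSplit, floor_inv_eq_of_mem_Ioc (by exact_mod_cast hn) ⟨hz_left, hz_right⟩,
      Int.cast_natCast]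

theorem Icc_inv_add_one_union {n : ℕ} (hn : 0 < n) :
    Icc ((n : ℝ) + 1)⁻¹ (n : ℝ)⁻¹ ∪ Icc (n : ℝ)⁻¹ 1 = Icc ((n : ℝ) + 1)⁻¹ 1 := by
  have hn' : (0 : ℝ) < n := by exact_mod_cast hn
  exact Icc_union_Icc_eq_Icc (inv_anti₀ hn' (by linarith)) (Nat.cast_inv_le_one n)

theorem strictMonoOn_floorPowSplit_Icc (hp : 1 < p) {n : ℕ} (hn : 0 < n) :
    StrictMonoOn (floorPowSplit p) (Icc (n : ℝ)⁻¹ 1) := by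
  induction n, hn using Nat.le_induction with
  | base => simp
  | succ n hn ih =>
    have hn' : (0 : ℝ) < n := by exact_mod_cast hn
    push_cast
    rw [← Icc_inv_add_one_union hn]
    exact ((strictMonoOn_powSplit hp hn').congr (eqOn_floorPowSplit (by linarith) hn).symm).union
      ih (isGreatest_Icc (inv_anti₀ hn' (by linarith))) (isLeast_Icc (Nat.cast_inv_le_one n))

theorem continuousOn_floorPowSplit_Icc (hp : 0 < p) {n : ℕ} (hn : 0 < n) :
    ContinuousOn (floorPowSplit p) (Icc (n : ℝ)⁻¹ 1) := by
  induction n, hn using Nat.le_induction with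
  | base => simp
  | succ n hn ih =>
    push_cast
    rw [← Icc_inv_add_one_union hn]
    exact ((continuous_powSplit hp.le n).continuousOn.congr
      (eqOn_floorPowSplit hp.ne' hn)).union_of_isClosed ih isClosed_Icc isClosed_Icc

theorem exists_natCast_inv_lt {z : ℝ} (hz : 0 < z) : ∃ n : ℕ, 0 < n ∧ (n : ℝ)⁻¹ < z := by
  obtain ⟨n, hn⟩ := exists_nat_gt z⁻¹
  have hn' : (0 : ℝ) < n := (inv_pos.2 hz).trans hn
  exact ⟨n, by exact_mod_cast hn', inv_lt_of_inv_lt₀ hz hn⟩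

theorem exists_natCast_rpow_lt {s y : ℝ} (hs : s < 0) (hy : 0 < y) :
    ∃ n : ℕ, 0 < n ∧ (n : ℝ) ^ s < y := by
  have h := (tendsto_rpow_neg_atTop (neg_pos.2 hs)).comp tendsto_natCast_atTop_atTop
  rw [neg_neg] at h
  exact ((eventually_gt_atTop 0).and (h.eventually (gt_mem_nhds hy))).exists

theorem strictMonoOn_floorPowSplit (hp : 1 < p) : StrictMonoOn (floorPowSplit p) (Ioc 0 1) := by
  intro x hx y hy hxy
  obtain ⟨n, hn, hnx⟩ := exists_natCast_inv_lt hx.1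
  exact strictMonoOn_floorPowSplit_Icc hp hn ⟨hnx.le, hx.2⟩ ⟨(hnx.trans hxy).le, hy.2⟩ hxy

theorem continuousOn_floorPowSplit (hp : 0 < p) : ContinuousOn (floorPowSplit p) (Ioc 0 1) := by
  intro z hz
  obtain ⟨n, hn, hnz⟩ := exists_natCast_inv_lt hz.1
  refine (continuousOn_floorPowSplit_Icc hp hn z ⟨hnz.le, hz.2⟩).mono_of_mem_nhdsWithin ?_
  exact mem_nhdsWithin.2 ⟨Ioi (n : ℝ)⁻¹, isOpen_Ioi, hnz, fun x hx => ⟨hx.1.le, hx.2.2⟩⟩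

theorem mapsTo_floorPowSplit (hp : 1 < p) : MapsTo (floorPowSplit p) (Ioc 0 1) (Ioc 0 1) := by
  intro z hz
  obtain ⟨n, hn, hnz⟩ := exists_natCast_inv_lt hz.1
  have hmono := strictMonoOn_floorPowSplit_Icc hp hn
  have hz_mem : z ∈ Icc (n : ℝ)⁻¹ 1 := ⟨hnz.le, hz.2⟩
  constructor
  · calc 0 < (n : ℝ) ^ (1 - p) := rpow_pos_of_pos (by exact_mod_cast hn) _
      _ = floorPowSplit p (n : ℝ)⁻¹ := (floorPowSplit_natCast_inv (by linarith) hn).symm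
      _ < floorPowSplit p z := hmono (left_mem_Icc.2 (Nat.cast_inv_le_one n)) hz_mem hnz
  · calc floorPowSplit p z ≤ floorPowSplit p 1 :=
          hmono.monotoneOn hz_mem (right_mem_Icc.2 (Nat.cast_inv_le_one n)) hz.2
      _ = 1 := floorPowSplit_one (by linarith)

theorem surjOn_floorPowSplit (hp : 1 < p) : SurjOn (floorPowSplit p) (Ioc 0 1) (Ioc 0 1) := by
  intro y hy
  have hp0 : 0 < p := by linarith
  obtain ⟨n, hn, hny⟩ := exists_natCast_rpow_lt (sub_neg.2 hp) hy.1
  have h_ivt := intermediate_value_Icc (Nat.cast_inv_le_one n)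
    (continuousOn_floorPowSplit_Icc hp0 hn)
  rw [floorPowSplit_natCast_inv hp0.ne' hn, floorPowSplit_one hp0.ne'] at h_ivt
  obtain ⟨z, hz, rfl⟩ := h_ivt ⟨hny.le, hy.2⟩
  have hn' : (0 : ℝ) < n := by exact_mod_cast hn
  exact ⟨z, ⟨(inv_pos.2 hn').trans_le hz.1, hz.2⟩, rfl⟩

end

/-- For real `p > 1`, the function `z ↦ ⌊z⁻¹⌋·z^p + (1 − ⌊z⁻¹⌋·z)^p` is a
continuous bijection from `(0,1]` onto `(0,1]`. -/
theorem floor_rpow_continuous_bijOn (p : ℝ) (hp : 1 < p) :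
    ContinuousOn (fun z : ℝ => (⌊z⁻¹⌋ : ℝ) * z ^ p + (1 - (⌊z⁻¹⌋ : ℝ) * z) ^ p)
      (Set.Ioc 0 1) ∧
    Set.BijOn (fun z : ℝ => (⌊z⁻¹⌋ : ℝ) * z ^ p + (1 - (⌊z⁻¹⌋ : ℝ) * z) ^ p)
      (Set.Ioc 0 1) (Set.Ioc 0 1) :=
  ⟨continuousOn_floorPowSplit (by linarith), mapsTo_floorPowSplit hp,
    (strictMonoOn_floorPowSplit hp).injOn, surjOn_floorPowSplit hp⟩
end

section
/- Let q > p > 1 be reals and suppose 0 < b < a < 1 satisfy 2·((a+2b)/2)^p ≥ a^p + 2b^p. Then there exist reals c, d with 0 ≤ c < b < d < a, c + 2d = a + 2b, c^p + 2d^p = a^p + 2b^p, and c^q + 2d^q < a^q + 2b^q. -/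
/-!
The pair `(c, d)` is found by the intermediate value theorem on the line `c + 2d = a + 2b`,
between `d = (a + b) / 2` (where strict convexity of `x ^ p` puts `c ^ p + 2d ^ p` below the target)
and `d = min a ((a + 2b) / 2)` (where the hypothesis, resp. strict convexity, puts it above).

For the `q`-th powers pick `α, β` with `x ^ (q-1) - β x ^ (p-1) - α` vanishing at `b` and `d`.
As a function of `u = x ^ (p-1)` it is `u ^ ((q-1)/(p-1))` minus an affine function, hence strictly
convex, so it is positive on `[0, b)`, negative on `(b, d)` and positive on `(d, ∞)`. Its
antiderivative `Φ` thus satisfies `Φ c < Φ b`, `Φ d < Φ b` and `Φ d < Φ a`, so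
`Φ c + 2Φ d < Φ a + 2Φ b`, and the constraints cancel all but the `x ^ q` terms.
-/

open Real Set

lemma two_mul_rpow_add_div_two_lt {p x y : ℝ} (hp : 1 < p) (hx : 0 ≤ x) (hy : 0 ≤ y)
    (hxy : x ≠ y) : 2 * ((x + y) / 2) ^ p < x ^ p + y ^ p := by
  have := (strictConvexOn_rpow hp).2 (mem_Ici.2 hx) (mem_Ici.2 hy) hxy one_half_pos one_half_pos
    (add_halves 1)
  simp only [smul_eq_mul] at this
  rw [show 1 / 2 * x + 1 / 2 * y = (x + y) / 2 by ring] at this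
  linarith

lemma exists_rpow_add_two_mul_rpow_eq {p a b : ℝ} (hp : 1 < p) (hb : 0 < b) (hba : b < a)
    (h : a ^ p + 2 * b ^ p ≤ 2 * ((a + 2 * b) / 2) ^ p) :
    ∃ c d : ℝ, 0 ≤ c ∧ c < b ∧ b < d ∧ d < a ∧ c + 2 * d = a + 2 * b ∧
      c ^ p + 2 * d ^ p = a ^ p + 2 * b ^ p := by
  set g : ℝ → ℝ := fun t ↦ (a + 2 * b - 2 * t) ^ p + 2 * t ^ p
  have hg : Continuous g := by
    have := continuous_rpow_const (zero_le_one.trans hp.le)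
    fun_prop
  have hg_mid : g ((a + b) / 2) < a ^ p + 2 * b ^ p := by
    have := two_mul_rpow_add_div_two_lt hp (hb.trans hba).le hb.le hba.ne'
    simp only [g, show a + 2 * b - 2 * ((a + b) / 2) = b by ring]
    linarith
  suffices ∃ d, (a + b) / 2 < d ∧ d < a ∧ 2 * d ≤ a + 2 * b ∧ g d = a ^ p + 2 * b ^ p by
    obtain ⟨d, hbd, hda, hc, hgd⟩ := this
    exact ⟨a + 2 * b - 2 * d, d, by linarith, by linarith, by linarith, hda, by ring, hgd⟩
  rcases lt_or_ge (2 * b) a with h2b | h2b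
  · have hg_right : a ^ p + 2 * b ^ p ≤ g ((a + 2 * b) / 2) := by
      simp only [g, show a + 2 * b - 2 * ((a + 2 * b) / 2) = 0 by ring,
        zero_rpow (zero_lt_one.trans hp).ne', zero_add, h]
    obtain ⟨d, hd, hgd⟩ := intermediate_value_Ioc (by linarith) hg.continuousOn ⟨hg_mid, hg_right⟩
    exact ⟨d, hd.1, by linarith [hd.2], by linarith [hd.2], hgd⟩
  · have hg_right : a ^ p + 2 * b ^ p < g a := by
      have := two_mul_rpow_add_div_two_lt hp (by linarith) (hb.trans hba).le
        (by linarith : 2 * b - a ≠ a)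
      simp only [g, show a + 2 * b - 2 * a = 2 * b - a by ring]
      rw [show (2 * b - a + a) / 2 = b by ring] at this
      linarith
    obtain ⟨d, hd, hgd⟩ := intermediate_value_Ioo (by linarith) hg.continuousOn ⟨hg_mid, hg_right⟩
    exact ⟨d, hd.1, hd.2, by linarith [hd.2], hgd⟩

section SignOfStrictConvex

variable {s : Set ℝ} {ψ : ℝ → ℝ} {B D u : ℝ}

lemma StrictConvexOn.neg_of_mem_Ioo_of_eq_zero (hψ : StrictConvexOn ℝ s ψ) (hB : B ∈ s)
    (hD : D ∈ s) (hψB : ψ B = 0) (hψD : ψ D = 0) (hu : u ∈ Ioo B D) : ψ u < 0 := by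
  have hBD : B < D := hu.1.trans hu.2
  simpa [hψB, hψD] using
    hψ.lt_on_openSegment hB hD hBD.ne (by rwa [openSegment_eq_Ioo hBD])

lemma StrictConvexOn.pos_of_lt_of_eq_zero (hψ : StrictConvexOn ℝ s ψ) (hu : u ∈ s) (hD : D ∈ s)
    (huB : u < B) (hBD : B < D) (hψB : ψ B = 0) (hψD : ψ D = 0) : 0 < ψ u := by
  have := hψ.slope_strict_mono_adjacent hu hD huB hBD
  rwa [hψB, hψD, sub_self, zero_div, zero_sub, neg_div, neg_neg_iff_pos,
    div_pos_iff_of_pos_right (sub_pos.2 huB)] at this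

lemma StrictConvexOn.pos_of_gt_of_eq_zero (hψ : StrictConvexOn ℝ s ψ) (hB : B ∈ s) (hu : u ∈ s)
    (hBD : B < D) (hDu : D < u) (hψB : ψ B = 0) (hψD : ψ D = 0) : 0 < ψ u := by
  have := hψ.slope_strict_mono_adjacent hB hu hBD hDu
  rwa [hψB, hψD, sub_self, zero_div, sub_zero, div_pos_iff_of_pos_right (sub_pos.2 hDu)] at this

end SignOfStrictConvex

lemma lt_of_hasDerivAt_pos_on_Ioo {f f' : ℝ → ℝ} {x y : ℝ} (hf : ∀ t, HasDerivAt f (f' t) t)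
    (hf' : ∀ t ∈ Ioo x y, 0 < f' t) (hxy : x < y) : f x < f y := by
  have hmono : StrictMonoOn f (Icc x y) :=
    strictMonoOn_of_hasDerivWithinAt_pos (convex_Icc x y)
      (fun t _ ↦ (hf t).continuousAt.continuousWithinAt)
      (fun t _ ↦ (hf t).hasDerivWithinAt) (by simpa only [interior_Icc] using hf')
  exact hmono (left_mem_Icc.2 hxy.le) (right_mem_Icc.2 hxy.le) hxy

lemma lt_of_hasDerivAt_neg_on_Ioo {f f' : ℝ → ℝ} {x y : ℝ} (hf : ∀ t, HasDerivAt f (f' t) t)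
    (hf' : ∀ t ∈ Ioo x y, f' t < 0) (hxy : x < y) : f y < f x := by
  simpa using lt_of_hasDerivAt_pos_on_Ioo (fun t ↦ (hf t).neg) (fun t ht ↦ neg_pos.2 (hf' t ht)) hxy

lemma exists_rpow_sub_affine_rpow_sign {p q b d : ℝ} (hp : 1 < p) (hpq : p < q) (hb : 0 ≤ b)
    (hbd : b < d) :
    ∃ α β : ℝ, (∀ t, 0 ≤ t → t < b → 0 < t ^ (q - 1) - β * t ^ (p - 1) - α) ∧
      (∀ t ∈ Ioo b d, t ^ (q - 1) - β * t ^ (p - 1) - α < 0) ∧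
      (∀ t, d < t → 0 < t ^ (q - 1) - β * t ^ (p - 1) - α) := by
  have hr : 0 < p - 1 := by linarith
  set s := (q - 1) / (p - 1)
  have hs : 1 < s := by rw [one_lt_div hr]; linarith
  have hpow : ∀ t : ℝ, 0 ≤ t → (t ^ (p - 1)) ^ s = t ^ (q - 1) := fun t ht ↦ by
    rw [← rpow_mul ht, mul_div_cancel₀ _ hr.ne']
  set B := b ^ (p - 1)
  set D := d ^ (p - 1)
  have hBD : B < D := rpow_lt_rpow hb hbd hr
  set β := (D ^ s - B ^ s) / (D - B)
  set α := B ^ s - β * B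
  set ψ : ℝ → ℝ := fun u ↦ u ^ s - β * u - α
  have hψ : StrictConvexOn ℝ (Ici 0) ψ := by
    have := ((strictConvexOn_rpow hs).sub_concaveOn
      ((LinearMap.lsmul ℝ ℝ β).concaveOn (convex_Ici 0))).add_const (-α)
    refine this.congr fun u _ ↦ ?_
    simp [ψ, sub_eq_add_neg]
  have hψB : ψ B = 0 := by simp only [ψ, α]; ring
  have hψD : ψ D = 0 := by
    simp only [ψ, α, β]; field_simp [(sub_pos.2 hBD).ne']; ring
  have hψt : ∀ t : ℝ, 0 ≤ t → t ^ (q - 1) - β * t ^ (p - 1) - α = ψ (t ^ (p - 1)) := fun t ht ↦ by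
    simp only [ψ, hpow t ht]
  have hB : B ∈ Ici (0 : ℝ) := rpow_nonneg hb _
  have hD : D ∈ Ici (0 : ℝ) := rpow_nonneg (hb.trans hbd.le) _
  refine ⟨α, β, fun t ht htb ↦ ?_, fun t ht ↦ ?_, fun t htd ↦ ?_⟩
  · rw [hψt t ht]
    exact hψ.pos_of_lt_of_eq_zero (rpow_nonneg ht _) hD (rpow_lt_rpow ht htb hr) hBD hψB hψD
  · have ht0 : 0 ≤ t := hb.trans ht.1.le
    rw [hψt t ht0]
    exact hψ.neg_of_mem_Ioo_of_eq_zero hB hD hψB hψD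
      ⟨rpow_lt_rpow hb ht.1 hr, rpow_lt_rpow ht0 ht.2 hr⟩
  · have ht0 : 0 ≤ t := (hb.trans hbd.le).trans htd.le
    rw [hψt t ht0]
    exact hψ.pos_of_gt_of_eq_zero hB (rpow_nonneg ht0 _) hBD
      (rpow_lt_rpow (hb.trans hbd.le) htd hr) hψB hψD

theorem rpow_add_two_mul_rpow_lt_of_eq {p q a b c d : ℝ} (hp : 1 < p) (hpq : p < q) (hc : 0 ≤ c)
    (hcb : c < b) (hbd : b < d) (hda : d < a) (hsum : c + 2 * d = a + 2 * b)
    (hpow : c ^ p + 2 * d ^ p = a ^ p + 2 * b ^ p) :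
    c ^ q + 2 * d ^ q < a ^ q + 2 * b ^ q := by
  obtain ⟨α, β, hleft, hmid, hright⟩ :=
    exists_rpow_sub_affine_rpow_sign hp hpq (hc.trans hcb.le) hbd
  have hp0 : p ≠ 0 := (zero_lt_one.trans hp).ne'
  have hq : 0 < q := by linarith
  set Φ : ℝ → ℝ := fun x ↦ x ^ q / q - β / p * x ^ p - α * x
  have hΦ : ∀ x, HasDerivAt Φ (x ^ (q - 1) - β * x ^ (p - 1) - α) x := fun x ↦ by
    have hxq := (hasDerivAt_rpow_const (x := x) (Or.inr (by linarith : 1 ≤ q))).div_const q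
    have hxp := (hasDerivAt_rpow_const (x := x) (Or.inr hp.le)).const_mul (β / p)
    refine ((hxq.sub hxp).sub ((hasDerivAt_id x).const_mul α)).congr_deriv ?_
    field_simp
  have hΦcb : Φ c < Φ b := lt_of_hasDerivAt_pos_on_Ioo hΦ
    (fun t ht ↦ hleft t (hc.trans ht.1.le) ht.2) hcb
  have hΦdb : Φ d < Φ b := lt_of_hasDerivAt_neg_on_Ioo hΦ hmid hbd
  have hΦda : Φ d < Φ a := lt_of_hasDerivAt_pos_on_Ioo hΦ
    (fun t ht ↦ hright t ht.1) hda
  have hΦsum : Φ c + 2 * Φ d < Φ a + 2 * Φ b := by linarith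
  have key : (c ^ q + 2 * d ^ q) / q < (a ^ q + 2 * b ^ q) / q := by
    simp only [Φ] at hΦsum
    linear_combination hΦsum + β / p * hpow + α * hsum
  exact (div_lt_div_iff_of_pos_right hq).1 key

theorem replacement_case_one_general (p q a b : ℝ) (hp : 1 < p) (hpq : p < q)
    (hb : 0 < b) (hba : b < a)
    (h : a ^ p + 2 * b ^ p ≤ 2 * ((a + 2 * b) / 2) ^ p) :
    ∃ c d : ℝ, 0 ≤ c ∧ c < b ∧ b < d ∧ d < a ∧
      c + 2 * d = a + 2 * b ∧
      c ^ p + 2 * d ^ p = a ^ p + 2 * b ^ p ∧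
      c ^ q + 2 * d ^ q < a ^ q + 2 * b ^ q := by
  obtain ⟨c, d, hc, hcb, hbd, hda, hsum, hpow⟩ := exists_rpow_add_two_mul_rpow_eq hp hb hba h
  exact ⟨c, d, hc, hcb, hbd, hda, hsum, hpow,
    rpow_add_two_mul_rpow_lt_of_eq hp hpq hc hcb hbd hda hsum hpow⟩

/-- Case 1 replacement: if `0 < b < a < 1` and `2·((a+2b)/2)^p ≥ a^p + 2b^p`, then
there exist `c, d` with `0 ≤ c < b < d < a`, `c + 2d = a + 2b`,
`c^p + 2d^p = a^p + 2b^p`, and `c^q + 2d^q < a^q + 2b^q`. -/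
theorem replacement_case_one (p q a b : ℝ) (hp : 1 < p) (hpq : p < q)
    (hb : 0 < b) (hba : b < a) (ha : a < 1)
    (h : a ^ p + 2 * b ^ p ≤ 2 * ((a + 2 * b) / 2) ^ p) :
    ∃ c d : ℝ, 0 ≤ c ∧ c < b ∧ b < d ∧ d < a ∧
      c + 2 * d = a + 2 * b ∧
      c ^ p + 2 * d ^ p = a ^ p + 2 * b ^ p ∧
      c ^ q + 2 * d ^ q < a ^ q + 2 * b ^ q :=
  replacement_case_one_general p q a b hp hpq hb hba h
end

section
/- Let q > p > 1 be reals and suppose 0 < b < a < 1 satisfy 2·((a+2b)/2)^p < a^p + 2b^p. Then a > 2b, and there exist reals c, d with 0 < b < c < d < a, c + d = a + 2b, c^p + d^p = a^p + 2b^p, and c^q + d^q < a^q + 2b^q. -/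
/-!
When `a ≤ 2b`, the triple `(m, m, 0)` with `m = (a + 2b)/2` majorizes `(a, b, b)`, so Karamata's
inequality for the convex `x ↦ x ^ p` contradicts the hypothesis; hence `a > 2b`.
The function `x ↦ x ^ p + (a + 2b - x) ^ p` then exceeds `a ^ p + 2b ^ p` at `x = 2b` and falls
below it at the midpoint, which produces `c` and `d = a + 2b - c`.

For the `q`-inequality, `g t = (a/b) ^ t - (c/b) ^ t - (d/b) ^ t` takes the value `-2` at `t = 1`
and `t = p`. After dividing by `(a/b) ^ t`, its derivative becomes strictly increasing, so it
vanishes at most once; by Rolle it vanishes between `1` and `p`, hence `g` increases on `[p, ∞)`.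
-/

open Real Set

theorem ConvexOn.map_add_map_le {f : ℝ → ℝ} {s : Set ℝ} (hf : ConvexOn ℝ s f) {u v x y : ℝ}
    (hu : u ∈ s) (hv : v ∈ s) (hx : x ∈ Icc u v) (hxy : x + y = u + v) :
    f x + f y ≤ f u + f v := by
  rcases hx.1.eq_or_lt with rfl | hux
  · rw [show y = v by linarith]
  have huv : 0 < v - u := by linarith [hx.2]
  set w := (v - x) / (v - u)
  have hw₀ : 0 ≤ w := div_nonneg (by linarith [hx.2]) huv.le
  have hw₁ : w ≤ 1 := (div_le_one huv).2 (by linarith)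
  have hx' : w • u + (1 - w) • v = x := by
    simp only [w, smul_eq_mul]; field_simp; ring
  have hy' : (1 - w) • u + w • v = y := by
    rw [show y = u + v - x by linarith]
    simp only [w, smul_eq_mul]; field_simp; ring
  have h₁ := hf.2 hu hv hw₀ (sub_nonneg.2 hw₁) (by ring)
  have h₂ := hf.2 hu hv (sub_nonneg.2 hw₁) hw₀ (by ring)
  rw [hx'] at h₁
  rw [hy'] at h₂
  simp only [smul_eq_mul] at h₁ h₂
  linarith

theorem two_mul_lt_of_two_mul_rpow_lt {p a b : ℝ} (hp : 1 ≤ p) (ha : 0 ≤ a) (hb : 0 ≤ b)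
    (h : 2 * ((a + 2 * b) / 2) ^ p < a ^ p + 2 * b ^ p) : 2 * b < a := by
  by_contra! hab
  set m := (a + 2 * b) / 2 with hm
  have hf := convexOn_rpow hp
  have h₁ : a ^ p + b ^ p ≤ (a / 2) ^ p + m ^ p :=
    hf.map_add_map_le (x := a) (y := b) (mem_Ici.2 (by positivity)) (mem_Ici.2 (by positivity))
      ⟨by linarith, by linarith⟩ (by ring)
  have h₂ : (a / 2) ^ p + b ^ p ≤ (0 : ℝ) ^ p + m ^ p :=
    hf.map_add_map_le (x := a / 2) (y := b) self_mem_Ici (mem_Ici.2 (by positivity))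
      ⟨by linarith, by linarith⟩ (by ring)
  rw [zero_rpow (by linarith)] at h₂
  linarith

theorem two_mul_rpow_lt_rpow_two_mul {p x : ℝ} (hp : 1 < p) (hx : 0 < x) :
    2 * x ^ p < (2 * x) ^ p := by
  rw [mul_rpow zero_le_two hx.le]
  have : (2 : ℝ) < 2 ^ p := by
    simpa using rpow_lt_rpow_of_exponent_lt one_lt_two hp
  exact mul_lt_mul_of_pos_right this (rpow_pos_of_pos hx p)

theorem exists_rpow_add_rpow_sub_eq {p s u y : ℝ} (hu : 0 < u) (hus : u < s / 2)
    (hlo : 2 * (s / 2) ^ p < y) (hhi : y < u ^ p + (s - u) ^ p) :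
    ∃ c ∈ Ioo u (s / 2), c ^ p + (s - c) ^ p = y := by
  have hcont : ContinuousOn (fun x => x ^ p + (s - x) ^ p) (Icc u (s / 2)) := by
    refine ContinuousOn.add ?_ ?_ <;>
      refine ContinuousOn.rpow_const (by fun_prop) fun x hx => Or.inl ?_
    · linarith [hx.1]
    · linarith [hx.2]
  have hmid : (s / 2) ^ p + (s - s / 2) ^ p = 2 * (s / 2) ^ p := by
    rw [show s - s / 2 = s / 2 by ring]; ring
  exact intermediate_value_Ioo' hus.le hcont ⟨hmid ▸ hlo, hhi⟩

theorem lt_of_apply_eq_of_deriv_pos_after_zero {g g' : ℝ → ℝ}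
    (hg : ∀ t, HasDerivAt g (g' t) t) (hg' : ∀ s t, s < t → g' s = 0 → 0 < g' t)
    {t₀ t₁ t₂ : ℝ} (h₀₁ : t₀ < t₁) (h₁₂ : t₁ < t₂) (heq : g t₀ = g t₁) : g t₁ < g t₂ := by
  have hcont : Continuous g := continuous_iff_continuousAt.2 fun t => (hg t).continuousAt
  obtain ⟨s, hs, hs₀⟩ := exists_hasDerivAt_eq_zero h₀₁ hcont.continuousOn heq fun t _ => hg t
  have hmono : StrictMonoOn g (Ici s) :=
    strictMonoOn_of_hasDerivWithinAt_pos (convex_Ici s) hcont.continuousOn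
      (fun t _ => (hg t).hasDerivWithinAt)
      (fun t ht => hg' s t (by simpa using ht) hs₀)
  exact hmono (mem_Ici.2 hs.2.le) (mem_Ici.2 (hs.2.trans h₁₂).le) h₁₂

theorem rpow_sub_rpow_sub_rpow_lt {x y z t₀ t₁ t₂ : ℝ} (hx : 1 < x) (hy : 1 < y)
    (hxz : x < z) (hyz : y < z) (h₀₁ : t₀ < t₁) (h₁₂ : t₁ < t₂)
    (heq : z ^ t₀ - x ^ t₀ - y ^ t₀ = z ^ t₁ - x ^ t₁ - y ^ t₁) :
    z ^ t₁ - x ^ t₁ - y ^ t₁ < z ^ t₂ - x ^ t₂ - y ^ t₂ := by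
  have hx₀ : 0 < x := by linarith
  have hy₀ : 0 < y := by linarith
  have hz₀ : 0 < z := by linarith
  set g' : ℝ → ℝ := fun t => z ^ t * log z - x ^ t * log x - y ^ t * log y
  have hg : ∀ t, HasDerivAt (fun t => z ^ t - x ^ t - y ^ t) (g' t) t := fun t =>
    (((hasStrictDerivAt_const_rpow hz₀ t).hasDerivAt.sub
      (hasStrictDerivAt_const_rpow hx₀ t).hasDerivAt).sub
      (hasStrictDerivAt_const_rpow hy₀ t).hasDerivAt)
  have hquot : ∀ t, g' t / z ^ t = log z - (x / z) ^ t * log x - (y / z) ^ t * log y := by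
    intro t
    have hzt : z ^ t ≠ 0 := (rpow_pos_of_pos hz₀ t).ne'
    simp only [g', div_rpow hx₀.le hz₀.le, div_rpow hy₀.le hz₀.le]
    field_simp
  have hmono : StrictMono fun t => g' t / z ^ t := by
    intro s t hst
    simp only [hquot]
    have hx' := rpow_lt_rpow_of_exponent_gt (div_pos hx₀ hz₀) ((div_lt_one hz₀).2 hxz) hst
    have hy' := rpow_lt_rpow_of_exponent_gt (div_pos hy₀ hz₀) ((div_lt_one hz₀).2 hyz) hst
    nlinarith [log_pos hx, log_pos hy]
  refine lt_of_apply_eq_of_deriv_pos_after_zero hg (fun s t hst hs => ?_) h₀₁ h₁₂ heq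
  have : g' s / z ^ s < g' t / z ^ t := hmono hst
  rw [hs, zero_div] at this
  exact (div_pos_iff_of_pos_right (rpow_pos_of_pos hz₀ t)).1 this

theorem rpow_add_rpow_lt_of_eq {a b c d k r s t : ℝ} (hb : 0 < b) (hbc : b < c) (hbd : b < d)
    (hca : c < a) (hda : d < a) (hrs : r < s) (hst : s < t)
    (hr : c ^ r + d ^ r = a ^ r + k * b ^ r) (hs : c ^ s + d ^ s = a ^ s + k * b ^ s) :
    c ^ t + d ^ t < a ^ t + k * b ^ t := by
  have hratio : ∀ τ : ℝ, (a / b) ^ τ - (c / b) ^ τ - (d / b) ^ τ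
      = (a ^ τ - c ^ τ - d ^ τ) / b ^ τ := by
    intro τ
    rw [div_rpow (by linarith) hb.le, div_rpow (by linarith) hb.le, div_rpow (by linarith) hb.le]
    ring
  have hval : ∀ τ : ℝ, c ^ τ + d ^ τ = a ^ τ + k * b ^ τ →
      (a / b) ^ τ - (c / b) ^ τ - (d / b) ^ τ = -k := by
    intro τ hτ
    rw [hratio, div_eq_iff (rpow_pos_of_pos hb τ).ne']
    linarith
  have key := rpow_sub_rpow_sub_rpow_lt ((one_lt_div hb).2 hbc) ((one_lt_div hb).2 hbd)
    (div_lt_div_of_pos_right hca hb) (div_lt_div_of_pos_right hda hb) hrs hst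
    ((hval r hr).trans (hval s hs).symm)
  rw [hval s hs, hratio, lt_div_iff₀ (rpow_pos_of_pos hb t)] at key
  linarith

theorem replacement_case_two_general (p q a b : ℝ) (hp : 1 < p) (hpq : p < q)
    (hb : 0 < b) (hba : b < a)
    (h : 2 * ((a + 2 * b) / 2) ^ p < a ^ p + 2 * b ^ p) :
    2 * b < a ∧
    ∃ c d : ℝ, b < c ∧ c < d ∧ d < a ∧
      c + d = a + 2 * b ∧
      c ^ p + d ^ p = a ^ p + 2 * b ^ p ∧
      c ^ q + d ^ q < a ^ q + 2 * b ^ q := by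
  have h2ba : 2 * b < a := two_mul_lt_of_two_mul_rpow_lt hp.le (by linarith) hb.le h
  have hhi : a ^ p + 2 * b ^ p < (2 * b) ^ p + (a + 2 * b - 2 * b) ^ p := by
    rw [add_sub_cancel_right, add_comm]
    linarith [two_mul_rpow_lt_rpow_two_mul hp hb]
  obtain ⟨c, ⟨h2bc, hcm⟩, hc⟩ :=
    exists_rpow_add_rpow_sub_eq (by positivity) (by linarith) h hhi
  have hsum : c + (a + 2 * b - c) = a + 2 * b := by ring
  have hcd : c < a + 2 * b - c := by linarith
  have hda : a + 2 * b - c < a := by linarith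
  refine ⟨h2ba, c, a + 2 * b - c, by linarith, hcd, hda, hsum, hc, ?_⟩
  exact rpow_add_rpow_lt_of_eq hb (by linarith) (by linarith) (by linarith) hda hp hpq
    (by simp only [rpow_one]; linarith) hc

/-- Case 2 replacement: if `0 < b < a < 1` and `2·((a+2b)/2)^p < a^p + 2b^p`, then
`a > 2b` and there exist `c, d` with `0 < b < c < d < a`, `c + d = a + 2b`,
`c^p + d^p = a^p + 2b^p`, and `c^q + d^q < a^q + 2b^q`. -/
theorem replacement_case_two (p q a b : ℝ) (hp : 1 < p) (hpq : p < q)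
    (hb : 0 < b) (hba : b < a) (ha : a < 1)
    (h : 2 * ((a + 2 * b) / 2) ^ p < a ^ p + 2 * b ^ p) :
    2 * b < a ∧
    ∃ c d : ℝ, b < c ∧ c < d ∧ d < a ∧
      c + d = a + 2 * b ∧
      c ^ p + d ^ p = a ^ p + 2 * b ^ p ∧
      c ^ q + d ^ q < a ^ q + 2 * b ^ q :=
  replacement_case_two_general p q a b hp hpq hb hba h
end

section
/- Let p ≥ 2 be an integer, n ≥ 1 an integer, and t ∈ (0,1) a real with n·t ≥ 1. Then over all vectors (w₁,...,wₙ) with Σwᵢ = 1 and 0 ≤ wᵢ ≤ t for all i, the maximum of Σwᵢ^p equals ⌊t⁻¹⌋·t^p + (1 − t·⌊t⁻¹⌋)^p, attained by w₁ = ... = w_{⌊t⁻¹⌋} = t, w_{⌊t⁻¹⌋+1} = 1 − t·⌊t⁻¹⌋, and wⱼ = 0 otherwise. -/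
/-!
For convex `f`, moving two entries apart while keeping their sum fixed does not decrease
`f a + f b`. Adding the entries one at a time, keep the partial sum in the form `k t + r` with
`0 ≤ r < t`: a new entry is either merged into `r` or used to fill `r` up to `t`, and if `f 0 = 0`
both moves preserve `∑ f wᵢ ≤ k f t + f r`. The bound is attained by `k` entries `t` and one
entry `r`, and for the total `1` one has `k = ⌊t⁻¹⌋`.
-/

open Finset Set

theorem ConvexOn.map_add_map_le_of_add_eq {s : Set ℝ} {f : ℝ → ℝ} (hf : ConvexOn ℝ s f)
    {x y a b : ℝ} (hx : x ∈ s) (hy : y ∈ s) (hxa : x ≤ a) (hay : a ≤ y) (hab : a + b = x + y) :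
    f a + f b ≤ f x + f y := by
  rcases hxa.eq_or_lt with rfl | hxa'
  · obtain rfl : b = y := by linarith
    exact le_rfl
  have hxy : 0 < y - x := by linarith
  set θ := (y - a) / (y - x) with hθ
  have hθ0 : 0 ≤ θ := div_nonneg (by linarith) hxy.le
  have hθ1 : 0 ≤ 1 - θ := by rw [hθ, one_sub_div hxy.ne']; exact div_nonneg (by linarith) hxy.le
  have ha : θ • x + (1 - θ) • y = a := by simp only [smul_eq_mul, hθ]; field_simp; ring
  have hb : (1 - θ) • x + θ • y = b := by
    rw [show b = x + y - a by linarith]; simp only [smul_eq_mul, hθ]; field_simp; ring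
  have hfa := hf.2 hx hy hθ0 hθ1 (by ring)
  have hfb := hf.2 hx hy hθ1 hθ0 (by ring)
  rw [ha] at hfa
  rw [hb] at hfb
  simp only [smul_eq_mul] at hfa hfb
  linarith

section BoundedEntries

variable {ι : Type*} {f : ℝ → ℝ} {t : ℝ}

theorem ConvexOn.exists_sum_eq_and_sum_map_le (hf : ConvexOn ℝ (Icc 0 t) f) (hf0 : f 0 = 0)
    (ht : 0 < t) (s : Finset ι) {w : ι → ℝ} (hw : ∀ i ∈ s, w i ∈ Icc 0 t) :
    ∃ k : ℕ, ∃ r ∈ Ico 0 t, ∑ i ∈ s, w i = k * t + r ∧ ∑ i ∈ s, f (w i) ≤ k * f t + f r := by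
  induction s using Finset.cons_induction with
  | empty => exact ⟨0, 0, ⟨le_rfl, ht⟩, by simp, by simp [hf0]⟩
  | cons a s _ ih =>
    obtain ⟨ha0, hat⟩ := hw a (mem_cons_self a s)
    obtain ⟨k, r, ⟨hr0, hrt⟩, hsum, hle⟩ := ih fun i hi => hw i (mem_cons_of_mem hi)
    rw [sum_cons, sum_cons, hsum]
    rcases lt_or_ge (w a + r) t with hlt | hge
    · have hmerge : f (w a) + f r ≤ f 0 + f (w a + r) :=
        hf.map_add_map_le_of_add_eq ⟨le_rfl, ht.le⟩ ⟨by linarith, hlt.le⟩ ha0 (by linarith)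
          (by ring)
      exact ⟨k, w a + r, ⟨by linarith, hlt⟩, by ring, by linarith⟩
    · have hfill : f (w a) + f r ≤ f (w a + r - t) + f t :=
        hf.map_add_map_le_of_add_eq ⟨by linarith, by linarith⟩ ⟨ht.le, le_rfl⟩ (by linarith) hat
          (by ring)
      exact ⟨k + 1, w a + r - t, ⟨by linarith, by linarith⟩, by push_cast; ring,
        by push_cast; linarith⟩

theorem ConvexOn.sum_map_le_of_sum_eq (hf : ConvexOn ℝ (Icc 0 t) f) (hf0 : f 0 = 0) (ht : 0 < t)
    (s : Finset ι) {w : ι → ℝ} (hw : ∀ i ∈ s, w i ∈ Icc 0 t) {K : ℕ} {r : ℝ} (hr : r ∈ Ico 0 t)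
    (hsum : ∑ i ∈ s, w i = K * t + r) : ∑ i ∈ s, f (w i) ≤ K * f t + f r := by
  obtain ⟨k, ρ, hρ, hsum', hle⟩ := hf.exists_sum_eq_and_sum_map_le hf0 ht s hw
  -- uniqueness of division with remainder by `t`
  obtain rfl : k = K := by
    have h₁ : (k : ℝ) < K + 1 := lt_of_mul_lt_mul_right (by linarith [hr.2, hρ.1]) ht.le
    have h₂ : (K : ℝ) < k + 1 := lt_of_mul_lt_mul_right (by linarith [hr.1, hρ.2]) ht.le
    norm_cast at h₁ h₂
    omega
  obtain rfl : ρ = r := by linarith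
  exact hle

end BoundedEntries

section GreedyVector

variable {M : Type*}

def greedyVector [Zero M] (K : ℕ) (x y : M) (i : ℕ) : M :=
  if i < K then x else if i = K then y else 0

theorem greedyVector_of_lt [Zero M] {K i : ℕ} (x y : M) (h : i < K) :
    greedyVector K x y i = x :=
  if_pos h

theorem greedyVector_mem [Zero M] {S : Set M} (K : ℕ) {x y : M} (hx : x ∈ S)
    (hy : y ∈ S) (h0 : (0 : M) ∈ S) (i : ℕ) : greedyVector K x y i ∈ S := by
  unfold greedyVector
  split_ifs <;> assumption

theorem greedyVector_pow [MonoidWithZero M] (K : ℕ) (x y : M) (i : ℕ) {p : ℕ}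
    (hp : p ≠ 0) : greedyVector K x y i ^ p = greedyVector K (x ^ p) (y ^ p) i := by
  unfold greedyVector
  split_ifs <;> simp [hp]

theorem sum_greedyVector [AddCommMonoid M] {K n : ℕ} (x y : M) (hKn : K ≤ n)
    (hy : K = n → y = 0) : ∑ i : Fin n, greedyVector K x y i = K • x + y := by
  have hhead : ∑ i ∈ range K, greedyVector K x y i = K • x := by
    rw [sum_congr rfl fun i hi => greedyVector_of_lt x y (Finset.mem_range.1 hi), sum_const,
      card_range]
  rw [Fin.sum_univ_eq_sum_range (greedyVector K x y)]
  rcases hKn.lt_or_eq with hlt | rfl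
  · rw [← sum_subset (range_subset_range.2 hlt) fun i _ hi => ?_, sum_range_succ, hhead]
    · simp [greedyVector]
    · simp only [Finset.mem_range, not_lt, Nat.succ_le_iff] at hi
      simp [greedyVector, hi.not_gt, hi.ne']
  · rw [hhead, hy rfl, add_zero]

end GreedyVector

theorem one_sub_mul_mem_Ico_of_floor_inv_eq {t : ℝ} (ht : 0 < t) {K : ℕ} (hK : ⌊t⁻¹⌋ = K) :
    1 - t * K ∈ Ico 0 t := by
  obtain ⟨hKle, hlt⟩ := Int.floor_eq_iff.1 hK
  push_cast at hKle hlt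
  have h₁ := mul_le_mul_of_nonneg_left hKle ht.le
  have h₂ := mul_lt_mul_of_pos_left hlt ht
  rw [mul_inv_cancel₀ ht.ne'] at h₁ h₂
  constructor <;> linarith

theorem max_power_sum_bounded_entries_general (p n : ℕ) (hp : 2 ≤ p)
    (t : ℝ) (ht : t ∈ Set.Ioo (0:ℝ) 1) (hnt : 1 ≤ (n : ℝ) * t) :
    IsGreatest
      {S : ℝ | ∃ w : Fin n → ℝ, (∀ i, 0 ≤ w i ∧ w i ≤ t) ∧ (∑ i, w i = 1) ∧
        S = ∑ i, (w i) ^ p}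
      ((⌊t⁻¹⌋ : ℝ) * t ^ p + (1 - t * (⌊t⁻¹⌋ : ℝ)) ^ p) ∧
    (∀ i : Fin n, 0 ≤ (if (i : ℤ) < ⌊t⁻¹⌋ then t else
        if (i : ℤ) = ⌊t⁻¹⌋ then 1 - t * (⌊t⁻¹⌋ : ℝ) else 0) ∧
      (if (i : ℤ) < ⌊t⁻¹⌋ then t else
        if (i : ℤ) = ⌊t⁻¹⌋ then 1 - t * (⌊t⁻¹⌋ : ℝ) else 0) ≤ t) ∧
    (∑ i : Fin n, (if (i : ℤ) < ⌊t⁻¹⌋ then t else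
        if (i : ℤ) = ⌊t⁻¹⌋ then 1 - t * (⌊t⁻¹⌋ : ℝ) else 0)) = 1 ∧
    (∑ i : Fin n, (if (i : ℤ) < ⌊t⁻¹⌋ then t else
        if (i : ℤ) = ⌊t⁻¹⌋ then 1 - t * (⌊t⁻¹⌋ : ℝ) else 0) ^ p)
      = (⌊t⁻¹⌋ : ℝ) * t ^ p + (1 - t * (⌊t⁻¹⌋ : ℝ)) ^ p := by
  have ht0 : 0 < t := ht.1
  have hp0 : p ≠ 0 := by omega
  obtain ⟨K, hK⟩ : ∃ K : ℕ, ⌊t⁻¹⌋ = K :=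
    Int.eq_ofNat_of_zero_le (Int.floor_nonneg.2 (by positivity))
  have hr := one_sub_mul_mem_Ico_of_floor_inv_eq ht0 hK
  simp only [hK, Int.cast_natCast, Nat.cast_lt, Nat.cast_inj]
  set r := 1 - t * K
  have hKn : K ≤ n := by
    have : (K : ℝ) ≤ n := le_of_mul_le_mul_right (by linarith [hr.1]) ht0
    exact_mod_cast this
  have hrn : K = n → r = 0 := by
    rintro rfl
    linarith [hr.1]
  have hbounds (i : Fin n) : greedyVector K t r i ∈ Icc 0 t :=
    greedyVector_mem (S := Icc 0 t) K ⟨ht0.le, le_rfl⟩ ⟨hr.1, hr.2.le⟩ ⟨le_rfl, ht0.le⟩ i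
  have hsum : ∑ i : Fin n, greedyVector K t r i = 1 := by
    rw [sum_greedyVector t r hKn hrn, nsmul_eq_mul]
    ring
  have hsum_pow : ∑ i : Fin n, greedyVector K t r i ^ p = K * t ^ p + r ^ p := by
    simp_rw [greedyVector_pow K t r _ hp0]
    rw [sum_greedyVector _ _ hKn fun h => by rw [hrn h, zero_pow hp0], nsmul_eq_mul]
  refine ⟨⟨⟨_, hbounds, hsum, hsum_pow.symm⟩, ?_⟩, hbounds, hsum, hsum_pow⟩
  rintro _ ⟨w, hw, hw1, rfl⟩
  exact ((convexOn_pow p).subset Icc_subset_Ici_self (convex_Icc 0 t)).sum_map_le_of_sum_eq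
    (zero_pow hp0) ht0 univ (fun i _ => hw i) hr (by rw [hw1]; ring)

/-- For integer `p ≥ 2`, `n ≥ 1` and `t ∈ (0,1)` with `n·t ≥ 1`, the maximum of
`Σ wᵢ^p` over vectors with `Σ wᵢ = 1` and `0 ≤ wᵢ ≤ t` equals
`⌊t⁻¹⌋·t^p + (1 − t·⌊t⁻¹⌋)^p`, attained by the vector with `⌊t⁻¹⌋` entries equal
to `t`, one entry equal to `1 − t·⌊t⁻¹⌋` and the rest zero. -/
theorem max_power_sum_bounded_entries (p n : ℕ) (hp : 2 ≤ p) (hn : 1 ≤ n)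
    (t : ℝ) (ht : t ∈ Set.Ioo (0:ℝ) 1) (hnt : 1 ≤ (n : ℝ) * t) :
    IsGreatest
      {S : ℝ | ∃ w : Fin n → ℝ, (∀ i, 0 ≤ w i ∧ w i ≤ t) ∧ (∑ i, w i = 1) ∧
        S = ∑ i, (w i) ^ p}
      ((⌊t⁻¹⌋ : ℝ) * t ^ p + (1 - t * (⌊t⁻¹⌋ : ℝ)) ^ p) ∧
    (∀ i : Fin n, 0 ≤ (if (i : ℤ) < ⌊t⁻¹⌋ then t else
        if (i : ℤ) = ⌊t⁻¹⌋ then 1 - t * (⌊t⁻¹⌋ : ℝ) else 0) ∧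
      (if (i : ℤ) < ⌊t⁻¹⌋ then t else
        if (i : ℤ) = ⌊t⁻¹⌋ then 1 - t * (⌊t⁻¹⌋ : ℝ) else 0) ≤ t) ∧
    (∑ i : Fin n, (if (i : ℤ) < ⌊t⁻¹⌋ then t else
        if (i : ℤ) = ⌊t⁻¹⌋ then 1 - t * (⌊t⁻¹⌋ : ℝ) else 0)) = 1 ∧
    (∑ i : Fin n, (if (i : ℤ) < ⌊t⁻¹⌋ then t else
        if (i : ℤ) = ⌊t⁻¹⌋ then 1 - t * (⌊t⁻¹⌋ : ℝ) else 0) ^ p)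
      = (⌊t⁻¹⌋ : ℝ) * t ^ p + (1 - t * (⌊t⁻¹⌋ : ℝ)) ^ p :=
  max_power_sum_bounded_entries_general p n hp t ht hnt
end

section
/- Let q > p > 1 be reals. Then f_{p,q} is a strictly increasing continuous function on [0,1], where f_{p,q}(0) = 0 and f_{p,q}(⌊z⁻¹⌋z^p + (1−⌊z⁻¹⌋z)^p) = ⌊z⁻¹⌋z^q + (1−⌊z⁻¹⌋z)^q for z ∈ (0,1]. -/
/-!
Put `g_p(z) = ⌊z⁻¹⌋ z^p + (1 - ⌊z⁻¹⌋ z)^p` for `0 < z` and `g_p(0) = 0`, so that `f ∘ g_p = g_q`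
on `[0,1]`. On `[1/(n+1), 1/n]` the function `g_p` agrees with `n z^p + (1 - n z)^p`, whose
derivative `n p (z^(p-1) - (1 - n z)^(p-1))` is positive there because `1 - n z < z`; its values
run from `(n+1)^(1-p)` up to `n^(1-p)`, so the ranges of consecutive pieces tile `(0,1]` in order.
Hence `g_p` is a strictly increasing bijection of `[0,1]`, so `f = g_q ∘ g_p⁻¹` is one as well, and
a strictly monotone map of an interval onto an interval is continuous.
-/

open Set

theorem StrictMonoOn.continuousOn_of_ordConnected_image {α β : Type*} [LinearOrder α]
    [TopologicalSpace α] [OrderTopology α] [LinearOrder β] [TopologicalSpace β] [OrderTopology β]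
    {f : α → β} {s : Set α} [s.OrdConnected] [(f '' s).OrdConnected] (hf : StrictMonoOn f s) :
    ContinuousOn f s := by
  rw [continuousOn_iff_continuous_domRestrict]
  exact continuous_subtype_val.comp (hf.orderIso f s).toHomeomorph.continuous

theorem strictMonoOn_of_comp_eqOn {α β γ : Type*} [LinearOrder α] [Preorder β] [Preorder γ]
    {f : β → γ} {g : α → β} {h : α → γ} {s : Set α} {t : Set β} (hg : StrictMonoOn g s)
    (hh : StrictMonoOn h s) (hgs : SurjOn g s t) (hfg : EqOn (f ∘ g) h s) : StrictMonoOn f t := by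
  intro x hx y hy hxy
  obtain ⟨a, ha, rfl⟩ := hgs hx
  obtain ⟨b, hb, rfl⟩ := hgs hy
  rw [← Function.comp_apply (f := f), ← Function.comp_apply (f := f), hfg ha, hfg hb]
  exact hh ha hb ((hg.lt_iff_lt ha hb).1 hxy)

noncomputable def partPowSum (n : ℕ) (p z : ℝ) : ℝ := n * z ^ p + (1 - n * z) ^ p

/-- The function `g_p`: the sum of `p`-th powers of the parts of `1 = z + ⋯ + z + (1 - n z)`,
`n = ⌊1/z⌋`. -/
noncomputable def greedyPowSum (p z : ℝ) : ℝ := if z = 0 then 0 else partPowSum ⌊z⁻¹⌋₊ p z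

section partPowSum

variable {n : ℕ} {p : ℝ}

theorem hasDerivAt_partPowSum (n : ℕ) (hp : 1 ≤ p) (z : ℝ) :
    HasDerivAt (partPowSum n p) (n * p * (z ^ (p - 1) - (1 - n * z) ^ (p - 1))) z := by
  have hlin : HasDerivAt (fun z : ℝ ↦ 1 - n * z) (-n) z := by
    simpa using ((hasDerivAt_id z).const_mul (n : ℝ)).const_sub 1
  have := ((Real.hasDerivAt_rpow_const (x := z) (Or.inr hp)).const_mul (n : ℝ)).add
    ((Real.hasDerivAt_rpow_const (Or.inr hp)).comp z hlin)
  exact this.congr_deriv (by ring)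

theorem continuous_partPowSum (n : ℕ) (hp : 1 ≤ p) : Continuous (partPowSum n p) :=
  continuous_iff_continuousAt.2 fun z ↦ (hasDerivAt_partPowSum n hp z).continuousAt

theorem strictMonoOn_partPowSum (n : ℕ) (hp : 1 < p) :
    StrictMonoOn (partPowSum n p) (Icc ((n + 1 : ℝ)⁻¹) (n : ℝ)⁻¹) := by
  refine strictMonoOn_of_deriv_pos (convex_Icc _ _) (continuous_partPowSum n hp.le).continuousOn ?_
  intro z hz
  rw [interior_Icc] at hz
  rw [(hasDerivAt_partPowSum n hp.le z).deriv]
  have hz0 : 0 < z := lt_trans (by positivity) hz.1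
  have hn : (0 : ℝ) < n := inv_pos.1 (hz0.trans hz.2)
  have h_rem_pos : 0 < 1 - n * z := by
    linarith [(lt_inv_mul_iff₀ hn).1 (by rw [mul_one]; exact hz.2)]
  have h_rem_lt : 1 - n * z < z := by
    linarith [(inv_lt_iff_one_lt_mul₀' (by positivity : (0 : ℝ) < n + 1)).1 hz.1]
  have := Real.rpow_lt_rpow h_rem_pos.le h_rem_lt (by linarith : 0 < p - 1)
  have : 0 < (n : ℝ) * p := by positivity
  nlinarith

theorem partPowSum_inv_succ (n : ℕ) (p : ℝ) :
    partPowSum n p (n + 1 : ℝ)⁻¹ = (n + 1 : ℝ) ^ (1 - p) := by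
  have hn : (0 : ℝ) < n + 1 := by positivity
  have hrem : 1 - n * (n + 1 : ℝ)⁻¹ = (n + 1 : ℝ)⁻¹ := by field_simp; ring
  rw [partPowSum, hrem, Real.rpow_sub hn, Real.rpow_one, Real.inv_rpow hn.le]
  field_simp

theorem partPowSum_inv (hn : n ≠ 0) (hp : p ≠ 0) :
    partPowSum n p (n : ℝ)⁻¹ = (n : ℝ) ^ (1 - p) := by
  have hn0 : (0 : ℝ) < n := by positivity
  rw [partPowSum, mul_inv_cancel₀ hn0.ne', sub_self, Real.zero_rpow hp, add_zero,
    Real.rpow_sub hn0, Real.rpow_one, Real.inv_rpow hn0.le, div_eq_mul_inv]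

end partPowSum

section greedyPowSum

variable {p z : ℝ}

theorem greedyPowSum_zero (p : ℝ) : greedyPowSum p 0 = 0 := if_pos rfl

theorem greedyPowSum_of_pos (hz : 0 < z) : greedyPowSum p z = partPowSum ⌊z⁻¹⌋₊ p z :=
  if_neg hz.ne'

theorem mem_Ioc_inv_floor_inv (hz : z ∈ Ioc 0 1) :
    1 ≤ ⌊z⁻¹⌋₊ ∧ z ∈ Ioc ((⌊z⁻¹⌋₊ + 1 : ℝ)⁻¹) (⌊z⁻¹⌋₊ : ℝ)⁻¹ := by
  have h1 : 1 ≤ ⌊z⁻¹⌋₊ := Nat.one_le_floor_iff _ |>.2 ((one_le_inv₀ hz.1).2 hz.2)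
  have hpos : (0 : ℝ) < ⌊z⁻¹⌋₊ := by exact_mod_cast h1
  exact ⟨h1, (inv_lt_comm₀ (by positivity) hz.1).2 (Nat.lt_floor_add_one _),
    (le_inv_comm₀ hpos hz.1).1 (Nat.floor_le (inv_pos.2 hz.1).le)⟩

theorem greedyPowSum_eq_partPowSum {n : ℕ} (hp : p ≠ 0) (hz : z ∈ Icc ((n + 1 : ℝ)⁻¹) (n : ℝ)⁻¹) :
    greedyPowSum p z = partPowSum n p z := by
  have hz0 : 0 < z := lt_of_lt_of_le (by positivity) hz.1
  rw [greedyPowSum_of_pos hz0]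
  rcases hz.1.eq_or_lt with rfl | hlt
  · rw [inv_inv, (by norm_cast : (n + 1 : ℝ) = ((n + 1 : ℕ) : ℝ)), Nat.floor_natCast,
      partPowSum_inv n.succ_ne_zero hp, Nat.cast_succ, partPowSum_inv_succ]
  · have hn' : (0 : ℝ) < n := inv_pos.1 (hz0.trans_le hz.2)
    congr
    rw [Nat.floor_eq_iff (inv_pos.2 hz0).le]
    exact ⟨(le_inv_comm₀ hz0 hn').1 hz.2,
      (inv_lt_comm₀ hz0 (by positivity : (0 : ℝ) < n + 1)).2 hlt⟩

theorem greedyPowSum_mem_Ioc (hp : 1 < p) (hz : z ∈ Ioc 0 1) :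
    greedyPowSum p z ∈ Ioc ((⌊z⁻¹⌋₊ + 1 : ℝ) ^ (1 - p)) ((⌊z⁻¹⌋₊ : ℝ) ^ (1 - p)) := by
  obtain ⟨hn, hzI⟩ := mem_Ioc_inv_floor_inv hz
  have hn0 : (0 : ℝ) < ⌊z⁻¹⌋₊ := by exact_mod_cast hn
  have hmono := strictMonoOn_partPowSum ⌊z⁻¹⌋₊ hp
  have hI : (⌊z⁻¹⌋₊ + 1 : ℝ)⁻¹ ≤ (⌊z⁻¹⌋₊ : ℝ)⁻¹ := inv_anti₀ hn0 (by linarith)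
  rw [greedyPowSum_eq_partPowSum (by linarith) (Ioc_subset_Icc_self hzI),
    ← partPowSum_inv_succ _ p, ← partPowSum_inv (by omega) (by linarith)]
  exact ⟨hmono (left_mem_Icc.2 hI) (Ioc_subset_Icc_self hzI) hzI.1,
    hmono.monotoneOn (Ioc_subset_Icc_self hzI) (right_mem_Icc.2 hI) hzI.2⟩

theorem strictMonoOn_greedyPowSum (hp : 1 < p) : StrictMonoOn (greedyPowSum p) (Icc 0 1) := by
  intro x hx y hy hxy
  have hy' : y ∈ Ioc 0 1 := ⟨hx.1.trans_lt hxy, hy.2⟩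
  rcases hx.1.eq_or_lt with rfl | hx0
  · rw [greedyPowSum_zero]
    exact (Real.rpow_pos_of_pos (by positivity) _).trans (greedyPowSum_mem_Ioc hp hy').1
  have hx' : x ∈ Ioc 0 1 := ⟨hx0, hx.2⟩
  rcases (Nat.floor_le_floor (inv_anti₀ hx0 hxy.le)).eq_or_lt with heq | hlt
  · obtain ⟨-, hxI⟩ := mem_Ioc_inv_floor_inv hx'
    obtain ⟨-, hyI⟩ := mem_Ioc_inv_floor_inv hy'
    rw [heq] at hyI
    replace hxI := Ioc_subset_Icc_self hxI
    replace hyI := Ioc_subset_Icc_self hyI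
    rw [greedyPowSum_eq_partPowSum (by linarith) hxI, greedyPowSum_eq_partPowSum (by linarith) hyI]
    exact strictMonoOn_partPowSum _ hp hxI hyI hxy
  · calc greedyPowSum p x ≤ (⌊x⁻¹⌋₊ : ℝ) ^ (1 - p) := (greedyPowSum_mem_Ioc hp hx').2
      _ ≤ (⌊y⁻¹⌋₊ + 1 : ℝ) ^ (1 - p) :=
        Real.rpow_le_rpow_of_nonpos (by positivity) (by exact_mod_cast hlt) (by linarith)
      _ < greedyPowSum p y := (greedyPowSum_mem_Ioc hp hy').1

theorem mapsTo_greedyPowSum (hp : 1 < p) : MapsTo (greedyPowSum p) (Icc 0 1) (Icc 0 1) := by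
  intro z hz
  rcases hz.1.eq_or_lt with rfl | hz0
  · rw [greedyPowSum_zero]
    exact left_mem_Icc.2 zero_le_one
  obtain ⟨hn, -⟩ := mem_Ioc_inv_floor_inv ⟨hz0, hz.2⟩
  have h := greedyPowSum_mem_Ioc hp ⟨hz0, hz.2⟩
  exact ⟨(Real.rpow_nonneg (by positivity) _).trans h.1.le,
    h.2.trans (Real.rpow_le_one_of_one_le_of_nonpos (by exact_mod_cast hn) (by linarith))⟩

theorem surjOn_greedyPowSum (hp : 1 < p) : SurjOn (greedyPowSum p) (Icc 0 1) (Icc 0 1) := by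
  intro y hy
  rcases hy.1.eq_or_lt with rfl | hy0
  · exact ⟨0, left_mem_Icc.2 zero_le_one, greedyPowSum_zero p⟩
  have hneg : 1 - p < 0 := by linarith
  set n := ⌊y ^ (1 - p)⁻¹⌋₊
  have hn : 1 ≤ n := (Nat.one_le_floor_iff _).2
    (Real.one_le_rpow_of_pos_of_le_one_of_nonpos hy0 hy.2 (inv_nonpos.2 hneg.le))
  have hn0 : (0 : ℝ) < n := by exact_mod_cast hn
  have hyI : y ∈ Icc (partPowSum n p (n + 1 : ℝ)⁻¹) (partPowSum n p (n : ℝ)⁻¹) := by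
    rw [partPowSum_inv_succ, partPowSum_inv (by omega) (by linarith)]
    exact ⟨((Real.rpow_inv_lt_iff_of_neg hy0 (by positivity) hneg).1 (Nat.lt_floor_add_one _)).le,
      (Real.le_rpow_inv_iff_of_neg hn0 hy0 hneg).1 (Nat.floor_le (by positivity))⟩
  obtain ⟨z, hz, hzy⟩ := intermediate_value_Icc (inv_anti₀ hn0 (by linarith))
    (continuous_partPowSum n hp.le).continuousOn hyI
  exact ⟨z, ⟨(lt_of_lt_of_le (by positivity) hz.1).le,
    hz.2.trans (inv_le_one_of_one_le₀ (by exact_mod_cast hn))⟩,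
    (greedyPowSum_eq_partPowSum (by linarith) hz).trans hzy⟩

theorem image_greedyPowSum (hp : 1 < p) : greedyPowSum p '' Icc 0 1 = Icc 0 1 :=
  (mapsTo_greedyPowSum hp).image_subset.antisymm (surjOn_greedyPowSum hp)

end greedyPowSum

/-- For reals `q > p > 1`, the function `f_{p,q}` (determined by `f 0 = 0` and
`f(⌊z⁻¹⌋z^p + (1−⌊z⁻¹⌋z)^p) = ⌊z⁻¹⌋z^q + (1−⌊z⁻¹⌋z)^q` for `z ∈ (0,1]`) is
strictly increasing and continuous on `[0,1]`. -/
theorem f_pq_strictMono_continuous (p q : ℝ) (hp : 1 < p) (hpq : p < q)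
    (f : ℝ → ℝ) (hf0 : f 0 = 0)
    (hf : ∀ z ∈ Set.Ioc (0:ℝ) 1,
      f ((⌊z⁻¹⌋ : ℝ) * z ^ p + (1 - (⌊z⁻¹⌋ : ℝ) * z) ^ p)
        = (⌊z⁻¹⌋ : ℝ) * z ^ q + (1 - (⌊z⁻¹⌋ : ℝ) * z) ^ q) :
    StrictMonoOn f (Set.Icc 0 1) ∧ ContinuousOn f (Set.Icc 0 1) := by
  have hq : 1 < q := hp.trans hpq
  have hcomp : EqOn (f ∘ greedyPowSum p) (greedyPowSum q) (Icc 0 1) := by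
    intro z hz
    rcases hz.1.eq_or_lt with rfl | hz0
    · simp only [Function.comp_apply, greedyPowSum_zero, hf0]
    · have hcast : (⌊z⁻¹⌋₊ : ℝ) = (⌊z⁻¹⌋ : ℝ) :=
        natCast_floor_eq_intCast_floor (inv_pos.2 hz0).le
      simpa only [Function.comp_apply, greedyPowSum_of_pos hz0, partPowSum, hcast]
        using hf z ⟨hz0, hz.2⟩
  have himage : f '' Icc 0 1 = Icc 0 1 :=
    calc f '' Icc 0 1 = f '' (greedyPowSum p '' Icc 0 1) := by rw [image_greedyPowSum hp]
      _ = greedyPowSum q '' Icc 0 1 := by rw [image_image]; exact image_congr hcomp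
      _ = Icc 0 1 := image_greedyPowSum hq
  have hmono : StrictMonoOn f (Icc 0 1) := strictMonoOn_of_comp_eqOn (strictMonoOn_greedyPowSum hp)
    (strictMonoOn_greedyPowSum hq) (surjOn_greedyPowSum hp) hcomp
  have : (f '' Icc 0 1).OrdConnected := by
    rw [himage]
    exact ordConnected_Icc
  exact ⟨hmono, hmono.continuousOn_of_ordConnected_image⟩
end

section
/- Let ℓ ≥ 4 and n ≥ 1 be integers and let x₁,...,xₙ be nonnegative reals with Σᵢ xᵢ = 1/2. Then Σᵢ xᵢ^ℓ ≥ g_ℓ(Σᵢ xᵢ³), where g_ℓ : [0,1/8] → [0,1] is defined by g_ℓ(0)=0 and g_ℓ((⌊z⁻¹⌋z³ + (1−⌊z⁻¹⌋z)³)/8) = (⌊z⁻¹⌋z^ℓ + (1−⌊z⁻¹⌋z)^ℓ)/2^ℓ for z ∈ (0,1]. -/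
/-!
With `y = 2x` in the standard simplex, it suffices to show that the minimum of `∑ yᵢ ^ ℓ` over
the compact set of points of the simplex with a prescribed `∑ yᵢ ^ 3` is attained at a point
`(a, …, a, r, 0, …, 0)` with `0 ≤ r < a`: then `⌊a⁻¹⌋` is the number of `a`'s, and the defining
relation of `g` at `z = a` is the bound.

At a minimiser, no two coordinates lie strictly between `0` and the largest one. Otherwise some
triple `0 < d ≤ b < a` of coordinates can be deformed, keeping its sum and its sum of cubes,
along the curve on which one coordinate moves by `h` and the other two are the roots of the
quadratic with the resulting sum and product. For small `h < 0` the `ℓ`-th power sum decreases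
to first order: this is the chord inequality (if `d < b`, moving `d`) or the tangent inequality
(if `d = b`, moving `a`) for the strictly convex function `s ↦ s ^ ((ℓ - 1) / 2)`, taken at the
squares of the coordinates.
-/

open Finset Filter Topology

lemma HasDerivAt.eventually_nhdsLT_lt {f : ℝ → ℝ} {f' a : ℝ} (hf : HasDerivAt f f' a)
    (hf' : 0 < f') : ∀ᶠ h in 𝓝[<] a, f h < f a := by
  filter_upwards [(hasDerivAt_iff_tendsto_slope_left_right.1 hf).1.eventually
    (eventually_gt_nhds hf'), self_mem_nhdsWithin] with h hslope hh
  exact (slope_pos_iff_gt hh).1 hslope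

lemma exists_nonneg_add_eq_mul_eq {s p : ℝ} (hs : 0 ≤ s) (hp : 0 ≤ p) (hdisc : 4 * p ≤ s ^ 2) :
    ∃ u v : ℝ, 0 ≤ u ∧ 0 ≤ v ∧ u + v = s ∧ u * v = p := by
  have hroot : √(s ^ 2 - 4 * p) ≤ s := by
    rw [Real.sqrt_le_left hs]; linarith
  refine ⟨(s + √(s ^ 2 - 4 * p)) / 2, (s - √(s ^ 2 - 4 * p)) / 2, by positivity,
    by linarith, by ring, ?_⟩
  linear_combination (-1 / 4 : ℝ) * Real.sq_sqrt (by linarith : 0 ≤ s ^ 2 - 4 * p)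

lemma sq_rpow_half {c : ℝ} (hc : 0 ≤ c) (n : ℕ) : (c ^ 2) ^ ((n : ℝ) / 2) = c ^ n := by
  rw [← Real.rpow_natCast c 2, ← Real.rpow_mul hc, ← Real.rpow_natCast]
  push_cast
  ring_nf

lemma cyclic_pow_mul_sq_sub_pos {n : ℕ} (hn : 3 ≤ n) {a b d : ℝ} (hd : 0 ≤ d) (hdb : d < b)
    (hba : b < a) :
    0 < a ^ n * (b ^ 2 - d ^ 2) + b ^ n * (d ^ 2 - a ^ 2) + d ^ n * (a ^ 2 - b ^ 2) := by
  have hb : 0 ≤ b := hd.trans hdb.le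
  have hn' : (1 : ℝ) < n / 2 := by
    rw [lt_div_iff₀ two_pos]; exact_mod_cast (by omega : 1 * 2 < n)
  have hdb2 : d ^ 2 < b ^ 2 := by gcongr
  have hba2 : b ^ 2 < a ^ 2 := by gcongr
  have hslope := (strictConvexOn_rpow hn').slope_strict_mono_adjacent
    (Set.mem_Ici.2 (sq_nonneg d)) (Set.mem_Ici.2 (sq_nonneg a)) hdb2 hba2
  simp only [sq_rpow_half hd, sq_rpow_half hb, sq_rpow_half (hb.trans hba.le)] at hslope
  rw [div_lt_div_iff₀ (by linarith) (by linarith)] at hslope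
  linarith

lemma add_three_mul_sq_mul_pow_lt {m : ℕ} {a b : ℝ} (hb : 0 < b) (hba : b < a) :
    ((m : ℝ) + 3) * a ^ 2 * b ^ (m + 2) < 2 * a ^ (m + 3) * b + ((m : ℝ) + 1) * b ^ (m + 4) := by
  obtain ⟨t, rfl⟩ : ∃ t, a = t * b := ⟨a / b, by field_simp⟩
  have ht : 1 < t := by nlinarith
  have hbern := one_add_mul_self_lt_rpow_one_add (s := t ^ 2 - 1) (p := ((m + 3 : ℕ) : ℝ) / 2)
    (by nlinarith) (by nlinarith)
    (by rw [lt_div_iff₀ two_pos]; push_cast; linarith [(m.cast_nonneg : (0 : ℝ) ≤ m)])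
  rw [add_sub_cancel, sq_rpow_half (by positivity)] at hbern
  push_cast at hbern
  calc ((m : ℝ) + 3) * (t * b) ^ 2 * b ^ (m + 2) = b ^ (m + 4) * ((m + 3) * t ^ 2) := by ring
    _ < b ^ (m + 4) * (2 * t ^ (m + 3) + (m + 1)) := by gcongr; linarith
    _ = 2 * (t * b) ^ (m + 3) * b + ((m : ℝ) + 1) * b ^ (m + 4) := by ring

/-- Power sums of two numbers as functions of their sum `s` and product `p` (Newton's recursion),
followed by their partial derivatives in `s` and in `p`. -/
noncomputable def pairPowSum : ℕ → ℝ → ℝ → ℝ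
  | 0, _, _ => 2
  | 1, s, _ => s
  | k + 2, s, p => s * pairPowSum (k + 1) s p - p * pairPowSum k s p

noncomputable def pairPowSumDerivSum : ℕ → ℝ → ℝ → ℝ
  | 0, _, _ => 0
  | 1, _, _ => 1
  | k + 2, s, p => pairPowSum (k + 1) s p + s * pairPowSumDerivSum (k + 1) s p
      - p * pairPowSumDerivSum k s p

noncomputable def pairPowSumDerivProd : ℕ → ℝ → ℝ → ℝ
  | 0, _, _ => 0
  | 1, _, _ => 0
  | k + 2, s, p => s * pairPowSumDerivProd (k + 1) s p - pairPowSum k s p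
      - p * pairPowSumDerivProd k s p

lemma pairPowSum_add_mul (x y : ℝ) (k : ℕ) : pairPowSum k (x + y) (x * y) = x ^ k + y ^ k := by
  induction k using Nat.twoStepInduction with
  | zero => norm_num [pairPowSum]
  | one => simp [pairPowSum]
  | more k ih₁ ih₂ => simp only [pairPowSum, ih₁, ih₂]; ring

lemma hasDerivAt_pairPowSum (k : ℕ) {f g : ℝ → ℝ} {f' g' t : ℝ}
    (hf : HasDerivAt f f' t) (hg : HasDerivAt g g' t) :
    HasDerivAt (fun s => pairPowSum k (f s) (g s))
      (pairPowSumDerivSum k (f t) (g t) * f' + pairPowSumDerivProd k (f t) (g t) * g') t := by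
  induction k using Nat.twoStepInduction with
  | zero => simpa [pairPowSum, pairPowSumDerivSum, pairPowSumDerivProd] using hasDerivAt_const t 2
  | one => simpa [pairPowSum, pairPowSumDerivSum, pairPowSumDerivProd] using hf
  | more k ih₁ ih₂ =>
    have h : HasDerivAt
        (fun s => f s * pairPowSum (k + 1) (f s) (g s) - g s * pairPowSum k (f s) (g s)) _ t :=
      (hf.mul ih₂).sub (hg.mul ih₁)
    simp only [pairPowSum, pairPowSumDerivSum, pairPowSumDerivProd]
    convert h using 1
    ring

lemma pairPowSumDerivSum_add_mul_mul_sub (x y : ℝ) (k : ℕ) :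
    pairPowSumDerivSum (k + 1) (x + y) (x * y) * (x - y)
      = (k + 1) * (x ^ (k + 1) - y ^ (k + 1)) := by
  induction k using Nat.twoStepInduction with
  | zero => norm_num [pairPowSumDerivSum]
  | one => simp only [pairPowSumDerivSum, pairPowSum]; push_cast; ring
  | more k ih₁ ih₂ =>
    simp only [pairPowSumDerivSum, pairPowSum_add_mul] at ih₁ ih₂ ⊢
    push_cast at ih₁ ih₂ ⊢
    linear_combination (x + y) * ih₂ - x * y * ih₁

lemma pairPowSumDerivProd_add_mul_mul_sub (x y : ℝ) (k : ℕ) :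
    pairPowSumDerivProd (k + 1) (x + y) (x * y) * (x - y) = -(k + 1) * (x ^ k - y ^ k) := by
  induction k using Nat.twoStepInduction with
  | zero => norm_num [pairPowSumDerivProd]
  | one => simp only [pairPowSumDerivProd, pairPowSum]; push_cast; ring
  | more k ih₁ ih₂ =>
    simp only [pairPowSumDerivProd, pairPowSum_add_mul] at ih₁ ih₂ ⊢
    push_cast at ih₁ ih₂ ⊢
    linear_combination (x + y) * ih₂ - x * y * ih₁

lemma pairPowSumDerivSum_add_self_mul_self (x : ℝ) (k : ℕ) :
    pairPowSumDerivSum (k + 1) (x + x) (x * x) = (k + 1) ^ 2 * x ^ k := by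
  induction k using Nat.twoStepInduction with
  | zero => norm_num [pairPowSumDerivSum]
  | one => simp only [pairPowSumDerivSum, pairPowSum]; push_cast; ring
  | more k ih₁ ih₂ =>
    simp only [pairPowSumDerivSum, pairPowSum_add_mul] at ih₁ ih₂ ⊢
    push_cast at ih₁ ih₂ ⊢
    linear_combination (x + x) * ih₂ - x * x * ih₁

lemma pairPowSumDerivProd_add_self_mul_self (x : ℝ) (k : ℕ) :
    pairPowSumDerivProd (k + 2) (x + x) (x * x) = -((k + 2) * (k + 1)) * x ^ k := by
  induction k using Nat.twoStepInduction with
  | zero => norm_num [pairPowSumDerivProd, pairPowSum]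
  | one => simp only [pairPowSumDerivProd, pairPowSum]; push_cast; ring
  | more k ih₁ ih₂ =>
    simp only [pairPowSumDerivProd, pairPowSum_add_mul] at ih₁ ih₂ ⊢
    push_cast at ih₁ ih₂ ⊢
    linear_combination (x + x) * ih₂ - x * x * ih₁

/-- Along the curve `h ↦ (u h, v h, d + h)`, where `u h`, `v h` are the roots of
`X ^ 2 - (x + y - h) * X + curveProd x y d h`, both the sum and the sum of cubes of the triple
stay equal to those of `(x, y, d)`. -/
noncomputable def curveProd (x y d h : ℝ) : ℝ :=
  ((x + y - h) ^ 3 - (x ^ 3 + y ^ 3 + d ^ 3 - (d + h) ^ 3)) / (3 * (x + y - h))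

lemma curveProd_zero {x y : ℝ} (d : ℝ) (hxy : x + y ≠ 0) : curveProd x y d 0 = x * y := by
  simp only [curveProd]
  field_simp
  ring

lemma hasDerivAt_curveProd {x y : ℝ} (d : ℝ) (hxy : x + y ≠ 0) :
    HasDerivAt (curveProd x y d) ((d ^ 2 + x * y - (x + y) ^ 2) / (x + y)) 0 := by
  have hnum : HasDerivAt (fun h : ℝ => (x + y - h) ^ 3 - (x ^ 3 + y ^ 3 + d ^ 3 - (d + h) ^ 3))
      (-3 * (x + y) ^ 2 + 3 * d ^ 2) 0 := by
    have hpair := ((hasDerivAt_id' (x := (0 : ℝ))).const_sub (x + y)).fun_pow 3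
    have hlast := (((hasDerivAt_id' (x := (0 : ℝ))).const_add d).fun_pow 3).const_sub
      (x ^ 3 + y ^ 3 + d ^ 3)
    refine (hpair.sub hlast).congr_deriv ?_
    norm_num
  have hden : HasDerivAt (fun h : ℝ => 3 * (x + y - h)) (-3) 0 := by
    simpa using ((hasDerivAt_id' (x := (0 : ℝ))).const_sub (x + y)).const_mul 3
  refine (hnum.fun_div hden (by simpa using hxy)).congr_deriv ?_
  field_simp
  ring

noncomputable def curveSlope (k : ℕ) (x y d : ℝ) : ℝ :=
  -pairPowSumDerivSum k (x + y) (x * y)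
    + pairPowSumDerivProd k (x + y) (x * y) * ((d ^ 2 + x * y - (x + y) ^ 2) / (x + y))
    + k * d ^ (k - 1)

lemma hasDerivAt_curvePowSum (k : ℕ) {x y : ℝ} (d : ℝ) (hxy : x + y ≠ 0) :
    HasDerivAt (fun h => pairPowSum k (x + y - h) (curveProd x y d h) + (d + h) ^ k)
      (curveSlope k x y d) 0 := by
  have hpair := hasDerivAt_pairPowSum k ((hasDerivAt_id' (x := (0 : ℝ))).const_sub (x + y))
    (hasDerivAt_curveProd d hxy)
  have hlast := ((hasDerivAt_id' (x := (0 : ℝ))).const_add d).fun_pow k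
  refine (hpair.add hlast).congr_deriv ?_
  simp [curveSlope, curveProd_zero d hxy]

lemma curveSlope_mul_eq (n : ℕ) {x y : ℝ} (d : ℝ) (hxy : x + y ≠ 0) :
    curveSlope (n + 1) x y d * ((x - y) * (x + y))
      = (n + 1) *
        (x ^ n * (y ^ 2 - d ^ 2) + y ^ n * (d ^ 2 - x ^ 2) + d ^ n * (x ^ 2 - y ^ 2)) := by
  have hsum := pairPowSumDerivSum_add_mul_mul_sub x y n
  have hprod := pairPowSumDerivProd_add_mul_mul_sub x y n
  have hP := div_mul_cancel₀ (d ^ 2 + x * y - (x + y) ^ 2) hxy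
  simp only [curveSlope, Nat.add_sub_cancel]
  push_cast
  linear_combination (-(x + y)) * hsum
    + ((d ^ 2 + x * y - (x + y) ^ 2) / (x + y) * (x + y)) * hprod
    - (n + 1) * (x ^ n - y ^ n) * hP

lemma curveSlope_self_mul_eq (m : ℕ) {b : ℝ} (a : ℝ) (hb : b ≠ 0) :
    curveSlope (m + 4) b b a * (b + b) = (m + 4) *
      (2 * a ^ (m + 3) * b + (m + 1) * b ^ (m + 4) - (m + 3) * a ^ 2 * b ^ (m + 2)) := by
  have hsum : pairPowSumDerivSum (m + 4) (b + b) (b * b) = ((m + 3 : ℕ) + 1) ^ 2 * b ^ (m + 3) :=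
    pairPowSumDerivSum_add_self_mul_self b (m + 3)
  have hprod : pairPowSumDerivProd (m + 4) (b + b) (b * b)
      = -(((m + 2 : ℕ) + 2) * ((m + 2 : ℕ) + 1)) * b ^ (m + 2) :=
    pairPowSumDerivProd_add_self_mul_self b (m + 2)
  have hP := div_mul_cancel₀ (a ^ 2 + b * b - (b + b) ^ 2) (by simpa [← two_mul] using hb)
  simp only [curveSlope]
  push_cast at hsum hprod ⊢
  linear_combination (-(b + b)) * hsum
    + ((a ^ 2 + b * b - (b + b) ^ 2) / (b + b) * (b + b)) * hprod
    - ((m + 4) * (m + 3)) * b ^ (m + 2) * hP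

lemma exists_triple_powSum_lt_of_curveSlope_pos (k : ℕ) {x y d : ℝ} (hx : 0 < x) (hy : 0 < y)
    (hd : 0 < d) (hslope : 0 < curveSlope k x y d)
    (hdisc : ∀ᶠ h in 𝓝[<] 0, 4 * curveProd x y d h ≤ (x + y - h) ^ 2) :
    ∃ u v w : ℝ, 0 ≤ u ∧ 0 ≤ v ∧ 0 ≤ w ∧ u + v + w = x + y + d ∧
      u ^ 3 + v ^ 3 + w ^ 3 = x ^ 3 + y ^ 3 + d ^ 3 ∧
      u ^ k + v ^ k + w ^ k < x ^ k + y ^ k + d ^ k := by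
  have hxy : x + y ≠ 0 := by positivity
  have hprod_pos : ∀ᶠ h in 𝓝 (0 : ℝ), 0 < curveProd x y d h :=
    (hasDerivAt_curveProd d hxy).continuousAt.eventually
      (eventually_gt_nhds (by rw [curveProd_zero d hxy]; positivity))
  obtain ⟨h, hlt, hdisc, hprod, hlast, hneg⟩ :=
    ((hasDerivAt_curvePowSum k d hxy).eventually_nhdsLT_lt hslope |>.and <| hdisc.and <|
      (hprod_pos.filter_mono nhdsWithin_le_nhds).and <|
        ((eventually_gt_nhds (neg_neg_of_pos hd)).filter_mono nhdsWithin_le_nhds).and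
          self_mem_nhdsWithin).exists
  have hsum_pos : 0 < x + y - h := by linarith [show h < 0 from hneg]
  obtain ⟨u, v, hu, hv, huv, hprod_eq⟩ :=
    exists_nonneg_add_eq_mul_eq hsum_pos.le hprod.le hdisc
  refine ⟨u, v, d + h, hu, hv, by linarith, by linarith, ?_, ?_⟩
  · have hcurve : 3 * curveProd x y d h * (x + y - h)
        = (x + y - h) ^ 3 - (x ^ 3 + y ^ 3 + d ^ 3 - (d + h) ^ 3) := by
      rw [curveProd]; field_simp
    rw [← huv, ← hprod_eq] at hcurve
    linear_combination -hcurve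
  · simpa [← huv, ← hprod_eq, pairPowSum_add_mul, curveProd_zero d hxy] using hlt

lemma exists_triple_powSum_lt_of_lt (m : ℕ) {a b d : ℝ} (hd : 0 < d) (hdb : d < b) (hba : b < a) :
    ∃ u v w : ℝ, 0 ≤ u ∧ 0 ≤ v ∧ 0 ≤ w ∧ u + v + w = a + b + d ∧
      u ^ 3 + v ^ 3 + w ^ 3 = a ^ 3 + b ^ 3 + d ^ 3 ∧
      u ^ (m + 4) + v ^ (m + 4) + w ^ (m + 4) < a ^ (m + 4) + b ^ (m + 4) + d ^ (m + 4) := by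
  have hb : 0 < b := hd.trans hdb
  have hab : a + b ≠ 0 := by linarith
  have hslope : 0 < curveSlope (m + 4) a b d := by
    have hT := cyclic_pow_mul_sq_sub_pos (by omega : 3 ≤ m + 3) hd.le hdb hba
    refine pos_of_mul_pos_left (b := (a - b) * (a + b)) ?_ (by nlinarith)
    rw [curveSlope_mul_eq (m + 3) d hab]
    exact mul_pos (by positivity) hT
  have hdisc : ∀ᶠ h in 𝓝[<] (0 : ℝ), 4 * curveProd a b d h ≤ (a + b - h) ^ 2 := by
    have hcont : ContinuousAt (fun h => (a + b - h) ^ 2 - 4 * curveProd a b d h) 0 :=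
      (continuousAt_const.sub continuousAt_id).pow 2 |>.sub
        ((hasDerivAt_curveProd d hab).continuousAt.const_mul 4)
    have h0 : 0 < (a + b - 0) ^ 2 - 4 * curveProd a b d 0 := by
      rw [curveProd_zero d hab]; nlinarith
    filter_upwards [(hcont.eventually (eventually_gt_nhds h0)).filter_mono nhdsWithin_le_nhds]
      with h hh
    linarith
  exact exists_triple_powSum_lt_of_curveSlope_pos (m + 4) (hb.trans hba) hb hd hslope hdisc

/-- For `(a, d, d)`, moving one `d` along the curve leaves the power sum unchanged to first order,
so `a` is moved instead. -/
lemma exists_triple_powSum_lt_of_self_self (m : ℕ) {a d : ℝ} (hd : 0 < d) (hda : d < a) :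
    ∃ u v w : ℝ, 0 ≤ u ∧ 0 ≤ v ∧ 0 ≤ w ∧ u + v + w = d + d + a ∧
      u ^ 3 + v ^ 3 + w ^ 3 = d ^ 3 + d ^ 3 + a ^ 3 ∧
      u ^ (m + 4) + v ^ (m + 4) + w ^ (m + 4) < d ^ (m + 4) + d ^ (m + 4) + a ^ (m + 4) := by
  have hdd : d + d ≠ 0 := by positivity
  have hslope : 0 < curveSlope (m + 4) d d a := by
    have hχ := add_three_mul_sq_mul_pow_lt (m := m) hd hda
    refine pos_of_mul_pos_left (b := d + d) ?_ (by positivity)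
    rw [curveSlope_self_mul_eq m a hd.ne']
    exact mul_pos (by positivity) (by linarith)
  have hdisc : ∀ᶠ h in 𝓝[<] (0 : ℝ), 4 * curveProd d d a h ≤ (d + d - h) ^ 2 := by
    have hderiv : HasDerivAt (fun h => 4 * curveProd d d a h - (d + d - h) ^ 2)
        (2 * (a ^ 2 - d ^ 2) / d) 0 := by
      refine ((hasDerivAt_curveProd a hdd).const_mul 4 |>.sub
        ((hasDerivAt_id' (x := (0 : ℝ))).const_sub (d + d) |>.fun_pow 2)).congr_deriv ?_
      field_simp
      ring
    filter_upwards [hderiv.eventually_nhdsLT_lt (div_pos (by nlinarith) hd)] with h hh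
    rw [curveProd_zero a hdd] at hh
    linarith
  exact exists_triple_powSum_lt_of_curveSlope_pos (m + 4) hd hd (hd.trans hda) hslope hdisc

lemma exists_triple_powSum_lt (m : ℕ) {a b d : ℝ} (hd : 0 < d) (hdb : d ≤ b) (hba : b < a) :
    ∃ u v w : ℝ, 0 ≤ u ∧ 0 ≤ v ∧ 0 ≤ w ∧ u + v + w = a + b + d ∧
      u ^ 3 + v ^ 3 + w ^ 3 = a ^ 3 + b ^ 3 + d ^ 3 ∧
      u ^ (m + 4) + v ^ (m + 4) + w ^ (m + 4) < a ^ (m + 4) + b ^ (m + 4) + d ^ (m + 4) := by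
  rcases hdb.lt_or_eq with hdb | rfl
  · exact exists_triple_powSum_lt_of_lt m hd hdb hba
  · obtain ⟨u, v, w, hu, hv, hw, h₁, h₃, hk⟩ := exists_triple_powSum_lt_of_self_self m hd hba
    exact ⟨u, v, w, hu, hv, hw, by linarith, by linarith, by linarith⟩

lemma sum_apply_update {ι : Type*} [Fintype ι] [DecidableEq ι] (φ : ℝ → ℝ) (w : ι → ℝ) (i : ι)
    (u : ℝ) : ∑ k, φ (Function.update w i u k) = ∑ k, φ (w k) - φ (w i) + φ u := by
  simp only [Function.apply_update (fun _ => φ), Finset.mem_univ, sum_update_of_mem,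
    Finset.subset_univ, sum_sdiff_eq_sub, sum_singleton]
  ring

lemma eq_of_forall_powSum_le (m : ℕ) {ι : Type*} [Fintype ι] {w : ι → ℝ} (hw : ∀ i, 0 ≤ w i)
    (hmin : ∀ v : ι → ℝ, (∀ i, 0 ≤ v i) → ∑ i, v i = ∑ i, w i → ∑ i, v i ^ 3 = ∑ i, w i ^ 3 →
      ∑ i, w i ^ (m + 4) ≤ ∑ i, v i ^ (m + 4))
    {i j t : ι} (hj : 0 < w j) (hji : w j < w i) (ht : 0 < w t) (hti : w t < w i) : j = t := by
  classical
  by_contra hjt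
  wlog htj : w t ≤ w j generalizing j t
  · exact this ht hti hj hji (Ne.symm hjt) (le_of_not_ge htj)
  obtain ⟨u, v, r, hu, hv, hr, h1, h3, hk⟩ := exists_triple_powSum_lt m ht htj hji
  have hij : i ≠ j := by rintro rfl; exact hji.false
  have hit : i ≠ t := by rintro rfl; exact hti.false
  set w' := Function.update (Function.update (Function.update w i u) j v) t r
  have hsum : ∀ φ : ℝ → ℝ, ∑ k, φ (w' k)
      = ∑ k, φ (w k) - (φ (w i) + φ (w j) + φ (w t)) + (φ u + φ v + φ r) := by
    intro φ
    simp only [w', sum_apply_update, Function.update_of_ne (Ne.symm hjt),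
      Function.update_of_ne hit.symm, Function.update_of_ne hij.symm]
    ring
  have hw' : ∀ k, 0 ≤ w' k := by
    intro k
    simp only [w', Function.update_apply]
    split_ifs
    exacts [hr, hv, hu, hw k]
  have hsum₁ := hsum id
  have hsum₃ := hsum (· ^ 3)
  have hsumₖ := hsum (· ^ (m + 4))
  simp only [id] at hsum₁ hsum₃ hsumₖ
  linarith [hmin w' hw' (by linarith) (by linarith)]

lemma exists_sum_apply_eq_nat_mul_add {ι : Type*} [Fintype ι] {w : ι → ℝ} {a : ℝ} (ha : 0 < a)
    (hw : ∀ i, 0 ≤ w i) (hwa : ∀ i, w i ≤ a)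
    (hmid : ∀ j t, 0 < w j → w j < a → 0 < w t → w t < a → j = t) :
    ∃ (k : ℕ) (r : ℝ), 0 ≤ r ∧ r < a ∧ ∀ φ : ℝ → ℝ, φ 0 = 0 → ∑ i, φ (w i) = k * φ a + φ r := by
  classical
  have hsplit (φ : ℝ → ℝ) :
      ∑ i, φ (w i) = #{i | w i = a} * φ a + ∑ i with w i ≠ a, φ (w i) := by
    rw [← sum_filter_add_sum_filter_not univ (fun i => w i = a),
      sum_congr rfl fun i hi => by rw [(mem_filter.1 hi).2], sum_const, nsmul_eq_mul]
  have hzero {i : ι} (hi : ¬0 < w i) : w i = 0 := le_antisymm (not_lt.1 hi) (hw i)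
  refine ⟨#{i | w i = a}, ?_⟩
  by_cases hex : ∃ j, 0 < w j ∧ w j < a
  · obtain ⟨j, hj, hja⟩ := hex
    refine ⟨w j, hj.le, hja, fun φ hφ => ?_⟩
    rw [hsplit, sum_eq_single_of_mem j (by simpa using hja.ne)]
    intro i hi hij
    have hia := (mem_filter.1 hi).2
    rw [hzero fun h => hij (hmid i j h ((hwa i).lt_of_ne hia) hj hja), hφ]
  · push Not at hex
    refine ⟨0, le_rfl, ha, fun φ hφ => ?_⟩
    rw [hsplit, sum_eq_zero, hφ]
    intro i hi
    have hia := (mem_filter.1 hi).2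
    rw [hzero fun h => hia ((hex i h).antisymm' (hwa i)), hφ]

lemma floor_inv_eq_of_nat_mul_add_eq_one {k : ℕ} {a r : ℝ} (ha : 0 < a) (hr : 0 ≤ r)
    (hra : r < a) (h : k * a + r = 1) : ⌊a⁻¹⌋ = k := by
  have hinv : a⁻¹ = k + r / a := by field_simp; linarith
  rw [hinv, Int.floor_natCast_add, Int.floor_eq_zero_iff.2 ⟨by positivity, (div_lt_one ha).2 hra⟩,
    add_zero]

theorem exists_nat_mul_add_le_powSum (m : ℕ) {ι : Type*} [Fintype ι] {y : ι → ℝ}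
    (hy : y ∈ stdSimplex ℝ ι) :
    ∃ (k : ℕ) (a r : ℝ), 0 < a ∧ a ≤ 1 ∧ 0 ≤ r ∧ r < a ∧ k * a + r = 1 ∧
      k * a ^ 3 + r ^ 3 = ∑ i, y i ^ 3 ∧ k * a ^ (m + 4) + r ^ (m + 4) ≤ ∑ i, y i ^ (m + 4) := by
  set K := {v ∈ stdSimplex ℝ ι | ∑ i, v i ^ 3 = ∑ i, y i ^ 3}
  have hK : IsCompact K :=
    (isCompact_stdSimplex ℝ ι).inter_right (isClosed_eq (by fun_prop) continuous_const)
  obtain ⟨w, ⟨⟨hw, hw₁⟩, hw₃⟩, hwmin⟩ := hK.exists_isMinOn ⟨y, hy, rfl⟩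
    (by fun_prop : Continuous fun v : ι → ℝ => ∑ i, v i ^ (m + 4)).continuousOn
  have hmin (v : ι → ℝ) (hv : ∀ i, 0 ≤ v i) (hv₁ : ∑ i, v i = ∑ i, w i)
      (hv₃ : ∑ i, v i ^ 3 = ∑ i, w i ^ 3) : ∑ i, w i ^ (m + 4) ≤ ∑ i, v i ^ (m + 4) :=
    hwmin ⟨⟨hv, hv₁.trans hw₁⟩, hv₃.trans hw₃⟩
  obtain ⟨j, -, -⟩ := exists_ne_zero_of_sum_ne_zero (hw₁.trans_ne one_ne_zero)
  obtain ⟨i₀, -, hi₀⟩ := exists_max_image univ w ⟨j, mem_univ j⟩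
  have ha₁ : w i₀ ≤ 1 := hw₁ ▸ single_le_sum (fun i _ => hw i) (mem_univ i₀)
  have ha : 0 < w i₀ := by
    by_contra! h
    linarith [sum_nonpos (s := univ) fun i _ => (hi₀ i (mem_univ i)).trans h]
  obtain ⟨k, r, hr, hra, hφ⟩ := exists_sum_apply_eq_nat_mul_add ha hw (fun i => hi₀ i (mem_univ i))
    fun j t => eq_of_forall_powSum_le m hw hmin
  refine ⟨k, w i₀, r, ha, ha₁, hr, hra, ?_, ?_, ?_⟩
  · simpa [hw₁] using (hφ id rfl).symm
  · rw [← hw₃]; exact (hφ (· ^ 3) (by norm_num)).symm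
  · simpa using (hφ (· ^ (m + 4)) (by simp)) ▸ hwmin ⟨hy, rfl⟩

theorem power_sum_ge_g_general (ℓ : ℕ) (hℓ : 4 ≤ ℓ) (n : ℕ) (x : Fin n → ℝ)
    (hx : ∀ i, 0 ≤ x i) (hsum : ∑ i, x i = 1 / 2)
    (g : ℝ → ℝ)
    (hg : ∀ z ∈ Set.Ioc (0:ℝ) 1,
      g (((⌊z⁻¹⌋ : ℝ) * z ^ 3 + (1 - (⌊z⁻¹⌋ : ℝ) * z) ^ 3) / 8)
        = ((⌊z⁻¹⌋ : ℝ) * z ^ ℓ + (1 - (⌊z⁻¹⌋ : ℝ) * z) ^ ℓ) / 2 ^ ℓ) :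
    g (∑ i, (x i) ^ 3) ≤ ∑ i, (x i) ^ ℓ := by
  obtain ⟨m, rfl⟩ : ∃ m, ℓ = m + 4 := ⟨ℓ - 4, by omega⟩
  have hy : (fun i => 2 * x i) ∈ stdSimplex ℝ (Fin n) :=
    ⟨fun i => mul_nonneg zero_le_two (hx i), by rw [← mul_sum, hsum]; norm_num⟩
  obtain ⟨k, a, r, ha, ha₁, hr, hra, h₁, h₃, hle⟩ := exists_nat_mul_add_le_powSum m hy
  have hval := hg a ⟨ha, ha₁⟩
  rw [floor_inv_eq_of_nat_mul_add_eq_one ha hr hra h₁, Int.cast_natCast,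
    show 1 - (k : ℝ) * a = r by linarith] at hval
  simp only [mul_pow, ← mul_sum] at h₃ hle
  calc g (∑ i, x i ^ 3) = g ((k * a ^ 3 + r ^ 3) / 8) := by rw [h₃]; ring_nf
    _ = (k * a ^ (m + 4) + r ^ (m + 4)) / 2 ^ (m + 4) := hval
    _ ≤ ∑ i, x i ^ (m + 4) := by rw [div_le_iff₀ (by positivity)]; linarith

/-- Corollary: for `ℓ ≥ 4`, nonnegative reals `x₁,…,xₙ` with `Σ xᵢ = 1/2` satisfy
`Σ xᵢ^ℓ ≥ g_ℓ(Σ xᵢ³)`, where `g_ℓ` is determined by `g_ℓ(0)=0` and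
`g_ℓ((⌊z⁻¹⌋z³+(1−⌊z⁻¹⌋z)³)/8) = (⌊z⁻¹⌋z^ℓ+(1−⌊z⁻¹⌋z)^ℓ)/2^ℓ` for `z ∈ (0,1]`. -/
theorem power_sum_ge_g (ℓ : ℕ) (hℓ : 4 ≤ ℓ) (n : ℕ) (hn : 1 ≤ n) (x : Fin n → ℝ)
    (hx : ∀ i, 0 ≤ x i) (hsum : ∑ i, x i = 1 / 2)
    (g : ℝ → ℝ) (hg0 : g 0 = 0)
    (hg : ∀ z ∈ Set.Ioc (0:ℝ) 1,
      g (((⌊z⁻¹⌋ : ℝ) * z ^ 3 + (1 - (⌊z⁻¹⌋ : ℝ) * z) ^ 3) / 8)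
        = ((⌊z⁻¹⌋ : ℝ) * z ^ ℓ + (1 - (⌊z⁻¹⌋ : ℝ) * z) ^ ℓ) / 2 ^ ℓ) :
    g (∑ i, (x i) ^ 3) ≤ ∑ i, (x i) ^ ℓ :=
  power_sum_ge_g_general ℓ hℓ n x hx hsum g hg
end
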